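/- arXiv:1804.01851 — 7 statements merged into one kernel-verified Lean document; each statement's English description precedes it below -/
import Mathlib

section
/- Suppose W = W̃ (the coefficient and exponent matrices coincide). Then for every parameter vector c > 0, the map F_c is real analytic, injective, and its image is exactly the interior C° of the cone C = cone(W); that is, F_c is a bijection from ℝ^d onto C°. -/
open scoped BigOperators

noncomputable section

/-- The generalized exponential map `F_c(x) = ∑ i, c_i exp(w̃^i · x) w^i`. -/
def Fmap {d dt n : ℕ} (W : Matrix (Fin d) (Fin n) ℝ) (Wt : Matrix (Fin dt) (Fin n) ℝ)
    (c : Fin n → ℝ) (x : Fin dt → ℝ) : Fin d → ℝ :=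
  fun i => ∑ j, c j * Real.exp (∑ k, Wt k j * x k) * W i j

/-- The polyhedral cone generated by the columns of `W`. -/
def coneOf {d n : ℕ} (W : Matrix (Fin d) (Fin n) ℝ) : Set (Fin d → ℝ) :=
  {y | ∃ u : Fin n → ℝ, (∀ j, 0 ≤ u j) ∧ y = fun i => ∑ j, u j * W i j}

/-- The componentwise sign vector. -/
def signVec {n : ℕ} (x : Fin n → ℝ) : Fin n → SignType := fun i => SignType.sign (x i)

/-- The set of sign vectors of a set of real vectors. -/
def signSet {n : ℕ} (T : Set (Fin n → ℝ)) : Set (Fin n → SignType) := signVec '' T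

/-- The kernel of (the linear map given by) a matrix, as a set. -/
def kerSet {d n : ℕ} (W : Matrix (Fin d) (Fin n) ℝ) : Set (Fin n → ℝ) :=
  {x | W.mulVec x = 0}

/-- The orthogonal complement (w.r.t. the standard inner product) of a set in `ℝ^n`. -/
def orthSet {n : ℕ} (T : Set (Fin n → ℝ)) : Set (Fin n → ℝ) :=
  {v | ∀ u ∈ T, ∑ i, u i * v i = 0}

/-!
For `W = W̃` the map is a gradient: `F_c = ∇ψ` with `ψ(x) = ∑ⱼ cⱼ exp (wʲ · x)`, i.e.
`F_c(x) = W (c ⊙ exp (Wᵀ x))`. Since `Wᵀ` is injective and `exp` is strictly increasing,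
`(F_c x - F_c y) · (x - y) > 0` for `x ≠ y`, which gives injectivity.

The interior of the cone is `W` applied to the open positive orthant (`W` is an open map, and
a point of the interior minus a small multiple of `W 𝟙` still lies in the cone). For `u > 0`
the function `x ↦ ψ(x) - u · Wᵀx` is coercive, because `cⱼ eᵗ - uⱼ t ≥ uⱼ |t| - 2uⱼ²/cⱼ`;
at a minimiser its gradient `F_c(x) - W u` vanishes.
-/

open Matrix Filter Function Topology
open scoped ContDiff

section ExpPotential

variable {ι : Type*} [Fintype ι] {c u : ι → ℝ}

lemma mul_abs_sub_le_mul_exp_sub_mul {c u : ℝ} (t : ℝ) (hc : 0 < c) (hu : 0 < u) :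
    u * |t| - 2 * u ^ 2 / c ≤ c * Real.exp t - u * t := by
  have hb : 0 ≤ 2 * u ^ 2 / c := by positivity
  rcases le_or_gt t 0 with ht | ht
  · rw [abs_of_nonpos ht]
    nlinarith [mul_pos hc (Real.exp_pos t)]
  · rw [abs_of_pos ht]
    have hexp := Real.quadratic_le_exp_of_nonneg ht.le
    have hsq : c * (c * t ^ 2 / 2 - 2 * u * t + 2 * u ^ 2 / c) = (c * t - 2 * u) ^ 2 / 2 := by
      field_simp; ring
    have : 0 ≤ c * t ^ 2 / 2 - 2 * u * t + 2 * u ^ 2 / c :=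
      nonneg_of_mul_nonneg_right (hsq ▸ by positivity) hc
    nlinarith [mul_le_mul_of_nonneg_left hexp hc.le]

lemma tendsto_sum_mul_exp_sub_cocompact (hc : ∀ j, 0 < c j) (hu : ∀ j, 0 < u j) :
    Tendsto (fun t : ι → ℝ => ∑ j, (c j * Real.exp (t j) - u j * t j)) (cocompact _) atTop := by
  rw [← coprodᵢ_cocompact, Filter.coprodᵢ, tendsto_iSup]
  intro j
  have hlow : ∀ t : ι → ℝ, u j * ‖t j‖ + -∑ k, 2 * u k ^ 2 / c k ≤
      ∑ k, (c k * Real.exp (t k) - u k * t k) := fun t =>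
    calc u j * ‖t j‖ + -∑ k, 2 * u k ^ 2 / c k
        ≤ ∑ k, u k * |t k| - ∑ k, 2 * u k ^ 2 / c k := by
          rw [Real.norm_eq_abs, ← sub_eq_add_neg]
          gcongr
          exact Finset.single_le_sum (f := fun k => u k * |t k|)
            (fun k _ => mul_nonneg (hu k).le (abs_nonneg _)) (Finset.mem_univ j)
      _ ≤ _ := by
          rw [← Finset.sum_sub_distrib]
          exact Finset.sum_le_sum fun k _ => mul_abs_sub_le_mul_exp_sub_mul _ (hc k) (hu k)
  refine tendsto_atTop_mono hlow (tendsto_atTop_add_const_right _ _ ?_)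
  exact (tendsto_norm_cocompact_atTop.const_mul_atTop (hu j)).comp tendsto_comap

lemma hasFDerivAt_sum_mul_exp_sub (t : ι → ℝ) :
    HasFDerivAt (fun t : ι → ℝ => ∑ j, (c j * Real.exp (t j) - u j * t j))
      (∑ j, (c j * Real.exp (t j) - u j) • (ContinuousLinearMap.proj j : (ι → ℝ) →L[ℝ] ℝ)) t := by
  refine HasFDerivAt.fun_sum fun j _ => ?_
  have hj := hasFDerivAt_apply (𝕜 := ℝ) j t
  convert (hj.exp.const_mul (c j)).fun_sub (hj.const_mul (u j)) using 1
  module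

end ExpPotential

section ExpWeights

variable {ι : Type*} [Fintype ι]

/-- The vector `c ⊙ exp t`, so that `F_c(x) = W (c ⊙ exp (Wᵀ x))`. -/
def expWeights (c t : ι → ℝ) : ι → ℝ := fun j => c j * Real.exp (t j)

lemma exp_sub_exp_mul_sub_pos {s t : ℝ} (h : s ≠ t) : 0 < (Real.exp s - Real.exp t) * (s - t) := by
  rcases h.lt_or_gt with h | h
  · exact mul_pos_of_neg_of_neg (by simpa using h) (by linarith)
  · exact mul_pos (by simpa using h) (by linarith)

lemma expWeights_sub_dotProduct_sub_pos {c a b : ι → ℝ} (hc : ∀ j, 0 < c j) (hab : a ≠ b) :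
    0 < (expWeights c a - expWeights c b) ⬝ᵥ (a - b) := by
  have hterm (j : ι) : (expWeights c a - expWeights c b) j * (a - b) j =
      c j * ((Real.exp (a j) - Real.exp (b j)) * (a j - b j)) := by
    simp only [expWeights, Pi.sub_apply]; ring
  obtain ⟨j, hj⟩ := Function.ne_iff.mp hab
  refine Finset.sum_pos' (fun k _ => ?_) ⟨j, Finset.mem_univ j, ?_⟩
  · rw [hterm]
    rcases eq_or_ne (a k) (b k) with h | h
    · simp [h]
    · exact (mul_pos (hc k) (exp_sub_exp_mul_sub_pos h)).le
  · rw [hterm]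
    exact mul_pos (hc j) (exp_sub_exp_mul_sub_pos hj)

end ExpWeights

section ExpMap

variable {d n : ℕ} {W : Matrix (Fin d) (Fin n) ℝ} {c : Fin n → ℝ}

lemma Fmap_self_eq_mulVec (W : Matrix (Fin d) (Fin n) ℝ) (c : Fin n → ℝ) (x : Fin d → ℝ) :
    Fmap W W c x = W *ᵥ expWeights c (Wᵀ *ᵥ x) := by
  ext i
  simp [Fmap, expWeights, mulVec, dotProduct, mul_comm]

lemma mem_coneOf_iff {y : Fin d → ℝ} : y ∈ coneOf W ↔ ∃ u, 0 ≤ u ∧ W *ᵥ u = y := by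
  simp only [coneOf, Set.mem_ofPred_eq, Pi.le_def, Pi.zero_apply]
  refine exists_congr fun u => and_congr_right fun _ => ?_
  rw [eq_comm]
  simp [funext_iff, mulVec, dotProduct, mul_comm]

lemma isOpen_setOf_forall_pos {ι : Type*} [Finite ι] : IsOpen {u : ι → ℝ | ∀ j, 0 < u j} := by
  simp only [Set.ofPred_forall]
  exact isOpen_iInter_of_finite fun j => isOpen_lt continuous_const (continuous_apply j)

lemma interior_coneOf_subset_mulVec_image_pos (W : Matrix (Fin d) (Fin n) ℝ) :
    interior (coneOf W) ⊆ W.mulVec '' {u | ∀ j, 0 < u j} := by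
  intro y hy
  set s := W *ᵥ fun _ => 1
  have hnear : ∀ᶠ δ in 𝓝 (0 : ℝ), y - δ • s ∈ coneOf W := by
    have : Tendsto (fun δ : ℝ => y - δ • s) (𝓝 0) (𝓝 y) := by
      have hcont : Continuous fun δ : ℝ => y - δ • s := by fun_prop
      simpa using hcont.tendsto 0
    exact this.eventually (mem_interior_iff_mem_nhds.mp hy)
  obtain ⟨δ, hδ, hpos⟩ := (hnear.filter_mono nhdsWithin_le_nhds |>.and
    (self_mem_nhdsWithin : Set.Ioi (0 : ℝ) ∈ 𝓝[>] 0)).exists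
  obtain ⟨v, hv, hvy⟩ := mem_coneOf_iff.mp hδ
  refine ⟨v + fun _ => δ, fun j => add_pos_of_nonneg_of_pos (hv j) hpos, ?_⟩
  rw [mulVec_add, hvy, show (fun _ => δ) = δ • (fun _ : Fin n => (1 : ℝ)) by ext; simp,
    mulVec_smul]
  abel

lemma mulVec_image_pos_subset_interior_coneOf (hW : Surjective W.mulVec) :
    W.mulVec '' {u | ∀ j, 0 < u j} ⊆ interior (coneOf W) := by
  refine interior_maximal ?_ (LinearMap.isOpenMap_of_finiteDimensional W.mulVecLin hW _
    isOpen_setOf_forall_pos)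
  rintro _ ⟨u, hu, rfl⟩
  exact mem_coneOf_iff.mpr ⟨u, fun j => (hu j).le, rfl⟩

lemma mulVec_surjective_of_rank_eq (hW : W.rank = d) : Surjective W.mulVec := by
  rw [← Matrix.coe_mulVecLin, ← LinearMap.range_eq_top]
  exact Submodule.eq_top_of_finrank_eq (hW.trans (Module.finrank_fin_fun ℝ).symm)

lemma transpose_mulVec_injective (hW : Surjective W.mulVec) : Injective Wᵀ.mulVec := by
  obtain ⟨B, hB⟩ := mulVec_surjective_iff_exists_right_inverse.mp hW
  intro x y hxy
  simpa [← transpose_mul, hB] using congrArg (Bᵀ *ᵥ ·) hxy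

lemma Fmap_self_injective (hW : Injective Wᵀ.mulVec) (hc : ∀ j, 0 < c j) :
    Injective (Fmap W W c) := by
  intro x y hxy
  by_contra hne
  have hpos := expWeights_sub_dotProduct_sub_pos hc (hW.ne hne)
  rw [← mulVec_sub, dotProduct_mulVec, vecMul_transpose, mulVec_sub, ← Fmap_self_eq_mulVec,
    ← Fmap_self_eq_mulVec, hxy, sub_self, zero_dotProduct] at hpos
  exact hpos.false

lemma exists_Fmap_self_eq_mulVec (hW : Injective Wᵀ.mulVec) (hc : ∀ j, 0 < c j)
    {u : Fin n → ℝ} (hu : ∀ j, 0 < u j) : ∃ x, Fmap W W c x = W *ᵥ u := by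
  set L := LinearMap.toContinuousLinearMap Wᵀ.mulVecLin
  set φ := fun t : Fin n → ℝ => ∑ j, (c j * Real.exp (t j) - u j * t j)
  have hφ := hasFDerivAt_sum_mul_exp_sub (c := c) (u := u)
  have hcont : Continuous (φ ∘ L) :=
    (continuous_iff_continuousAt.mpr fun t => (hφ t).continuousAt).comp L.continuous
  have hcoer : Tendsto (φ ∘ L) (cocompact _) atTop :=
    (tendsto_sum_mul_exp_sub_cocompact hc hu).comp
      (LinearMap.isClosedEmbedding_of_injective (LinearMap.ker_eq_bot.mpr hW)).tendsto_cocompact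
  obtain ⟨x, hx⟩ := hcont.exists_forall_le hcoer
  have hcrit := IsLocalMin.hasFDerivAt_eq_zero (Eventually.of_forall hx)
    ((hφ (L x)).comp x L.hasFDerivAt)
  set a := W *ᵥ (expWeights c (Wᵀ *ᵥ x) - u)
  have ha : a ⬝ᵥ a = 0 := by
    have := congrArg (fun T => T a) hcrit
    calc a ⬝ᵥ a = (a ᵥ* W) ⬝ᵥ (expWeights c (Wᵀ *ᵥ x) - u) := dotProduct_mulVec _ _ _
      _ = 0 := by simpa [L, dotProduct, expWeights, mulVec_transpose, mul_comm] using this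
  refine ⟨x, ?_⟩
  rw [Fmap_self_eq_mulVec, ← sub_eq_zero, ← mulVec_sub]
  exact dotProduct_self_eq_zero.mp ha

lemma analyticAt_Fmap {dt : ℕ} (W : Matrix (Fin d) (Fin n) ℝ) (Wt : Matrix (Fin dt) (Fin n) ℝ)
    (c : Fin n → ℝ) (x : Fin dt → ℝ) : AnalyticAt ℝ (Fmap W Wt c) x := by
  have : ContDiff ℝ ω (Fmap W Wt c) := by unfold Fmap; fun_prop
  exact this.contDiffAt.analyticAt

end ExpMap

theorem stmt0_general {d n : ℕ}
    (W : Matrix (Fin d) (Fin n) ℝ) (hW : W.rank = d)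
    (c : Fin n → ℝ) (hc : ∀ j, 0 < c j) :
    (∀ x, AnalyticAt ℝ (Fmap W W c) x) ∧
    Function.Injective (Fmap W W c) ∧
    Set.range (Fmap W W c) = interior (coneOf W) := by
  have hsurj := mulVec_surjective_of_rank_eq hW
  have hinj := transpose_mulVec_injective hsurj
  refine ⟨analyticAt_Fmap W W c, Fmap_self_injective hinj hc, ?_⟩
  refine subset_antisymm ?_ fun y hy => ?_
  · rintro _ ⟨x, rfl⟩
    refine mulVec_image_pos_subset_interior_coneOf hsurj
      ⟨_, fun j => mul_pos (hc j) (Real.exp_pos _), (Fmap_self_eq_mulVec W c x).symm⟩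
  · obtain ⟨u, hu, rfl⟩ := interior_coneOf_subset_mulVec_image_pos W hy
    exact exists_Fmap_self_eq_mulVec hinj hc hu

/-- If `W = W̃`, then for every `c > 0` the map `F_c` is real analytic,
injective, and its image is exactly the interior of `C = cone W`. -/
theorem stmt0 {d n : ℕ} (hd : 1 ≤ d) (hdn : d ≤ n)
    (W : Matrix (Fin d) (Fin n) ℝ) (hW : W.rank = d)
    (c : Fin n → ℝ) (hc : ∀ j, 0 < c j) :
    (∀ x, AnalyticAt ℝ (Fmap W W c) x) ∧
    Function.Injective (Fmap W W c) ∧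
    Set.range (Fmap W W c) = interior (coneOf W) :=
  stmt0_general W hW c hc
end
end

section
/- The map F_c is injective for all c > 0 if and only if sign(S) ∩ sign(S̃⊥) = {0}, i.e., no nonzero sign vector is simultaneously the sign vector of an element of S and of an element of S̃⊥. -/
open scoped BigOperators

noncomputable section

/-- sign of `exp a - exp b` equals sign of `a - b`. -/
lemma sign_exp_sub (a b : ℝ) :
    SignType.sign (Real.exp a - Real.exp b) = SignType.sign (a - b) := by
  rcases lt_trichotomy a b with h | h | h
  · rw [sign_eq_neg_one_iff.mpr (sub_neg.mpr (Real.exp_lt_exp.2 h)),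
      sign_eq_neg_one_iff.mpr (sub_neg.mpr h)]
  · simp [h]
  · rw [sign_eq_one_iff.mpr (sub_pos.mpr (Real.exp_lt_exp.2 h)),
      sign_eq_one_iff.mpr (sub_pos.mpr h)]

/-- Full row rank implies the transpose is injective (as dot products with rows). -/
lemma transpose_inj {dt n : ℕ} (Wt : Matrix (Fin dt) (Fin n) ℝ) (hWt : Wt.rank = dt)
    (x : Fin dt → ℝ) (hx : ∀ j, ∑ k, Wt k j * x k = 0) : x = 0 := by
  have hsurj : LinearMap.range Wt.mulVecLin = ⊤ := by
    apply Submodule.eq_top_of_finrank_eq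
    rw [← Matrix.rank, hWt, Module.finrank_fin_fun]
  obtain ⟨u, hu⟩ : ∃ u, Wt.mulVec u = x := by
    have := hsurj ▸ LinearMap.mem_range_self Wt.mulVecLin
    exact (LinearMap.range_eq_top.mp hsurj) x
  have hsum : ∑ k, x k * x k = 0 := by
    calc ∑ k, x k * x k = ∑ k, x k * ∑ j, Wt k j * u j := by
          refine Finset.sum_congr rfl fun k _ => ?_
          rw [← hu]; rfl
      _ = ∑ j, u j * ∑ k, Wt k j * x k := by
          simp_rw [Finset.mul_sum]
          rw [Finset.sum_comm]
          refine Finset.sum_congr rfl fun j _ => Finset.sum_congr rfl fun k _ => by ring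
      _ = 0 := by simp [hx]
  funext k
  have h1 : ∀ k ∈ Finset.univ, 0 ≤ x k * x k := fun k _ => mul_self_nonneg _
  have := (Finset.sum_eq_zero_iff_of_nonneg h1).mp hsum k (Finset.mem_univ k)
  simpa [mul_self_eq_zero] using this

/-- A vector orthogonal to the kernel of `Wt` lies in the row space of `Wt`. -/
lemma orth_ker_mem_rowspace {dt n : ℕ} (Wt : Matrix (Fin dt) (Fin n) ℝ) (v : Fin n → ℝ)
    (hv : v ∈ orthSet (kerSet Wt)) : ∃ x : Fin dt → ℝ, ∀ j, v j = ∑ k, Wt k j * x k := by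
  set A := Wt.mulVecLin with hA
  let φ : (Fin n → ℝ) →ₗ[ℝ] ℝ :=
    { toFun := fun u => ∑ i, u i * v i
      map_add' := by intro a b; simp [add_mul, Finset.sum_add_distrib]
      map_smul' := by intro r a; simp [Finset.mul_sum, mul_assoc] }
  have hker : LinearMap.ker A ≤ LinearMap.ker φ := by
    intro u hu
    exact hv u hu
  let ψq := Submodule.liftQ (LinearMap.ker A) φ hker
  let ψ₀ : LinearMap.range A →ₗ[ℝ] ℝ := ψq ∘ₗ (A.quotKerEquivRange).symm.toLinearMap
  obtain ⟨ψ, hψ⟩ := LinearMap.exists_extend ψ₀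
  have key : ∀ u, ψ (A u) = φ u := by
    intro u
    have h1 : (⟨A u, LinearMap.mem_range_self A u⟩ : LinearMap.range A) =
        (LinearMap.range A).subtype ⟨A u, LinearMap.mem_range_self A u⟩ := rfl
    have h2 : ψ (A u) = ψ₀ ⟨A u, LinearMap.mem_range_self A u⟩ := by
      rw [← hψ]; rfl
    rw [h2]
    show ψq ((A.quotKerEquivRange).symm ⟨A u, LinearMap.mem_range_self A u⟩) = φ u
    rw [LinearMap.quotKerEquivRange_symm_apply_image]
    exact Submodule.liftQ_apply _ _ _
  refine ⟨fun k => ψ (fun l => if k = l then 1 else 0), fun j => ?_⟩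
  have hvj : v j = φ (fun i => if j = i then 1 else 0) := by
    simp [φ, Finset.sum_ite_eq]
  rw [hvj, ← key]
  rw [LinearMap.pi_apply_eq_sum_univ ψ (A fun i => if j = i then 1 else 0)]
  refine Finset.sum_congr rfl fun k _ => ?_
  have : A (fun i => if j = i then 1 else 0) k = Wt k j := by
    simp [hA, Matrix.mulVecLin, Matrix.mulVec, dotProduct, mul_ite, Finset.sum_ite_eq]
  rw [this, smul_eq_mul]

/-- `F_c` is injective for all `c > 0` iff `sign(S) ∩ sign(S̃⊥) = {0}`,
where `S = ker W` and `S̃ = ker W̃`. -/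
theorem stmt2 {d dt n : ℕ} (hd : 1 ≤ d) (hdn : d ≤ n) (hdt : 1 ≤ dt) (hdtn : dt ≤ n)
    (W : Matrix (Fin d) (Fin n) ℝ) (Wt : Matrix (Fin dt) (Fin n) ℝ)
    (hW : W.rank = d) (hWt : Wt.rank = dt) :
    (∀ c : Fin n → ℝ, (∀ j, 0 < c j) → Function.Injective (Fmap W Wt c)) ↔
    signSet (kerSet W) ∩ signSet (orthSet (kerSet Wt)) = {0} := by
  constructor
  · -- injectivity for all c ⇒ sign condition
    intro hinj
    apply Set.eq_singleton_iff_unique_mem.mpr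
    constructor
    · -- 0 is in the intersection
      constructor
      · exact ⟨0, by simp [kerSet], by funext i; simp [signVec]⟩
      · refine ⟨0, fun u _ => by simp, by funext i; simp [signVec]⟩
    · rintro σ ⟨⟨z, hz, hzσ⟩, ⟨v, hv, hvσ⟩⟩
      obtain ⟨x, hx⟩ := orth_ker_mem_rowspace Wt v hv
      have hsign : ∀ j, SignType.sign (z j) = SignType.sign (v j) := by
        intro j
        have := congrFun hzσ j
        have h2 := congrFun hvσ j
        rw [← h2] at this
        exact this
      -- define c
      set c : Fin n → ℝ := fun j => if v j = 0 then 1 else z j / (Real.exp (v j) - 1) with hc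
      have hcpos : ∀ j, 0 < c j := by
        intro j
        by_cases h : v j = 0
        · simp [hc, h]
        · simp only [hc, if_neg h]
        
          have hev : SignType.sign (Real.exp (v j) - 1) = SignType.sign (v j) := by
            have := sign_exp_sub (v j) 0
            simpa using this
          rcases lt_trichotomy (v j) 0 with hv0 | hv0 | hv0
          · have hz0 : z j < 0 := sign_eq_neg_one_iff.mp
              (by rw [hsign j]; exact sign_eq_neg_one_iff.mpr hv0)
            have he0 : Real.exp (v j) - 1 < 0 := sign_eq_neg_one_iff.mp
              (by rw [hev]; exact sign_eq_neg_one_iff.mpr hv0)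
            exact div_pos_of_neg_of_neg hz0 he0
          · exact absurd hv0 h
          · have hz0 : 0 < z j := sign_eq_one_iff.mp
              (by rw [hsign j]; exact sign_eq_one_iff.mpr hv0)
            have he0 : 0 < Real.exp (v j) - 1 := sign_eq_one_iff.mp
              (by rw [hev]; exact sign_eq_one_iff.mpr hv0)
            exact div_pos hz0 he0
      have hcz : ∀ j, c j * (Real.exp (v j) - 1) = z j := by
        intro j
        by_cases h : v j = 0
        · have hzj : z j = 0 := sign_eq_zero_iff.mp (by rw [hsign j, h]; simp)
          simp [hc, h, hzj]
        · have hne : Real.exp (v j) - 1 ≠ 0 := by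
            intro habs
            apply h
            have : Real.exp (v j) = Real.exp 0 := by rw [Real.exp_zero]; linarith
            exact Real.exp_injective this
          simp [hc, if_neg h, div_mul_cancel₀ _ hne]
      -- Fmap c x = Fmap c 0
      have hF : Fmap W Wt c x = Fmap W Wt c 0 := by
        funext i
        have hker' : ∑ j, W i j * z j = 0 := congrFun hz i
        show ∑ j, c j * Real.exp (∑ k, Wt k j * x k) * W i j
            = ∑ j, c j * Real.exp (∑ k, Wt k j * (0 : Fin dt → ℝ) k) * W i j
        have e : ∀ j, c j * Real.exp (∑ k, Wt k j * x k) * W i j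
            - c j * Real.exp (∑ k, Wt k j * (0 : Fin dt → ℝ) k) * W i j = W i j * z j := by
          intro j
          rw [← hcz j, ← hx j]
          simp only [Pi.zero_apply, mul_zero, Finset.sum_const_zero, Real.exp_zero]
          ring
        rw [← sub_eq_zero, ← Finset.sum_sub_distrib]
        exact (Finset.sum_congr rfl fun j _ => e j).trans hker'
      have hx0 : x = 0 := hinj c hcpos hF
      have hv0 : v = 0 := by
        funext j
        rw [hx j, hx0]
        simp
      rw [← hvσ, hv0]
      funext j
      simp [signVec]
  · -- sign condition ⇒ injectivity for all c
    intro hsign c hc x y hxy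
    set a : Fin n → ℝ := fun j => ∑ k, Wt k j * x k with ha
    set b : Fin n → ℝ := fun j => ∑ k, Wt k j * y k with hb
    set z : Fin n → ℝ := fun j => c j * (Real.exp (a j) - Real.exp (b j)) with hzdef
    set v : Fin n → ℝ := fun j => a j - b j with hvdef
    have hzker : z ∈ kerSet W := by
      show W.mulVec z = 0
      funext i
      have hFi : (∑ j, c j * Real.exp (a j) * W i j)
          = ∑ j, c j * Real.exp (b j) * W i j := congrFun hxy i
      show ∑ j, W i j * z j = 0
      have e1 : ∑ j, W i j * z j = ∑ j, c j * Real.exp (a j) * W i j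
          - ∑ j, c j * Real.exp (b j) * W i j := by
        rw [← Finset.sum_sub_distrib]
        refine Finset.sum_congr rfl fun j _ => by simp only [hzdef]; ring
      rw [e1, hFi, sub_self]
    have hvorth : v ∈ orthSet (kerSet Wt) := by
      intro u hu
      have hu' : ∀ k, ∑ j, Wt k j * u j = 0 := fun k => congrFun hu k
      calc ∑ j, u j * v j = ∑ j, u j * ∑ k, Wt k j * (x k - y k) := by
            refine Finset.sum_congr rfl fun j _ => ?_
            simp only [hvdef, ha, hb, ← Finset.sum_sub_distrib]
            congr 1
            exact Finset.sum_congr rfl fun k _ => by ring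
        _ = ∑ k, (x k - y k) * ∑ j, Wt k j * u j := by
            simp_rw [Finset.mul_sum]
            rw [Finset.sum_comm]
            exact Finset.sum_congr rfl fun k _ => Finset.sum_congr rfl fun j _ => by ring
        _ = 0 := by simp [hu']
    have hsignzv : signVec z = signVec v := by
      funext j
      show SignType.sign (z j) = SignType.sign (v j)
      rw [hzdef]
      simp only
      rw [sign_mul, sign_eq_one_iff.mpr (hc j), one_mul, sign_exp_sub]
    have hmem : signVec z ∈ signSet (kerSet W) ∩ signSet (orthSet (kerSet Wt)) :=
      ⟨⟨z, hzker, rfl⟩, ⟨v, hvorth, hsignzv.symm⟩⟩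
    rw [hsign] at hmem
    have hv0 : v = 0 := by
      funext j
      have := congrFun (hsignzv.symm.trans hmem) j
      exact sign_eq_zero_iff.mp this
    have hxy0 : x = y := by
      have : ∀ j, ∑ k, Wt k j * (x k - y k) = 0 := by
        intro j
        have := congrFun hv0 j
        simp only [hvdef, ha, hb, Pi.zero_apply] at this
        rw [← this, ← Finset.sum_sub_distrib]
        exact Finset.sum_congr rfl fun k _ => by ring
      have := transpose_inj Wt hWt (fun k => x k - y k) this
      funext k
      have := congrFun this k
      simpa [sub_eq_zero] using this
    exact hxy0
end
end

section
/- Let S, S̃ be subspaces of ℝ^n of dimension n−d (with d ≤ n), and let W, W̃ ∈ ℝ^{d×n} be matrices of full rank d with ker W = S and ker W̃ = S̃. Then the following are equivalent: (1) sign(S) ∩ sign(S̃⊥) = {0}; (2) the products det(W_I)·det(W̃_I) over all subsets I ⊆ {1,…,n} of cardinality d are either all ≥ 0 or all ≤ 0, and det(W_I)·det(W̃_I) ≠ 0 for at least one such subset I. -/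
open scoped BigOperators

noncomputable section

/-- The `d×d` minor of a `d×n` matrix given by a choice `f` of `d` columns. -/
def minor {d n : ℕ} (W : Matrix (Fin d) (Fin n) ℝ) (f : Fin d → Fin n) : ℝ :=
  (W.submatrix id f).det

/-! For a positive diagonal matrix `D`, Cauchy–Binet expands `det (W D W̃ᵀ)` as the multiaffine
polynomial `∑_I det W_I det W̃_I ∏_{i ∈ I} D_i`. Since `S̃⊥ = range W̃ᵀ` and `W̃ᵀ` is injective,
a nonzero common sign vector of `S` and `S̃⊥` is the same as vectors `x ∈ S` and `v = W̃ᵀ y ≠ 0`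
with `x = D v` for some positive `D`, i.e. a kernel vector of `W D W̃ᵀ`. So condition (1) says that
this polynomial has no zero on the positive orthant. That happens exactly when its coefficients
are weakly of one sign and not all zero: each coefficient dominates near the indicator vector of
its subset, and the orthant is connected.
-/

open Matrix Finset Equiv

section CauchyBinet

variable {R : Type*} [CommRing R] {d n : ℕ}

theorem det_mul_eq_sum_prod_mul_det_submatrix (A : Matrix (Fin d) (Fin n) R)
    (C : Matrix (Fin n) (Fin d) R) :
    (A * C).det = ∑ g : Fin d → Fin n, (∏ i, C (g i) i) * (A.submatrix id g).det := by
  simp only [det_apply, mul_apply, prod_univ_sum, Fintype.piFinset_univ, smul_sum]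
  rw [sum_comm]
  refine sum_congr rfl fun g _ => ?_
  rw [mul_sum]
  refine sum_congr rfl fun σ _ => ?_
  simp only [submatrix_apply, id_eq, prod_mul_distrib, Units.smul_def, zsmul_eq_mul]
  ring

omit [CommRing R] in
theorem sum_injective_eq_sum_strictMono_perm {M : Type*} [AddCommMonoid M]
    (u : (Fin d → Fin n) → M) :
    ∑ g ∈ univ.filter (fun g : Fin d → Fin n => Function.Injective g), u g
      = ∑ p ∈ univ.filter (fun p : (Fin d → Fin n) × Perm (Fin d) => StrictMono p.1),
          u (p.1 ∘ p.2) := by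
  refine sum_nbij' (fun g => (g ∘ Tuple.sort g, (Tuple.sort g)⁻¹)) (fun p => p.1 ∘ p.2)
    ?_ ?_ ?_ ?_ ?_ <;> simp only [mem_filter, mem_univ, true_and]
  · intro g hg
    exact (Tuple.monotone_sort g).strictMono_of_injective (hg.comp (Tuple.sort g).injective)
  · intro p hp
    exact hp.injective.comp p.2.injective
  · intro g _
    funext x
    simp [Perm.inv_def]
  · rintro ⟨f, π⟩ hf
    have hsort : Tuple.sort (f ∘ π) = π⁻¹ := by
      have hmono : Monotone ((f ∘ π) ∘ ⇑π⁻¹) := by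
        simpa [Function.comp_assoc] using hf.monotone
      ext x
      exact congrArg Fin.val ((hf.injective.comp π.injective)
        (congrFun (Tuple.unique_monotone (f := f ∘ π) (Tuple.monotone_sort _) hmono) x))
    simp only [hsort, inv_inv, Prod.mk.injEq, and_true]
    funext x
    simp
  · intro g _
    congr 1
    funext x
    simp [Perm.inv_def]

theorem det_mul_eq_sum_strictMono (A : Matrix (Fin d) (Fin n) R) (C : Matrix (Fin n) (Fin d) R) :
    (A * C).det = ∑ f : Fin d → Fin n,
      if StrictMono f then (A.submatrix id f).det * (C.submatrix f id).det else 0 := by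
  rw [det_mul_eq_sum_prod_mul_det_submatrix,
    ← sum_filter_add_sum_filter_not univ (fun g : Fin d → Fin n => Function.Injective g)]
  have hnoninj : ∑ g ∈ univ.filter (fun g : Fin d → Fin n => ¬ Function.Injective g),
      (∏ i, C (g i) i) * (A.submatrix id g).det = 0 := by
    refine sum_eq_zero fun g hg => ?_
    obtain ⟨i, j, hij, hne⟩ : ∃ i j, g i = g j ∧ i ≠ j := by
      simpa [Function.Injective] using hg
    rw [det_zero_of_column_eq hne fun k => by simp [hij], mul_zero]
  rw [hnoninj, add_zero, sum_injective_eq_sum_strictMono_perm, sum_filter, Fintype.sum_prod_type]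
  refine sum_congr rfl fun f _ => ?_
  split_ifs with hf
  · have hperm : ∀ π : Perm (Fin d), (∏ i, C ((f ∘ π) i) i) * (A.submatrix id (f ∘ π)).det
        = (A.submatrix id f).det * (Perm.sign π • ∏ i, C (f (π i)) i) := by
      intro π
      rw [show A.submatrix id (f ∘ π) = (A.submatrix id f).submatrix id π from rfl, det_permute',
        Units.smul_def, zsmul_eq_mul]
      simp only [Function.comp_apply]
      ring
    rw [sum_congr rfl fun π _ => hperm π, ← mul_sum, det_apply (C.submatrix f id)]
    rfl
  · simp

end CauchyBinet

theorem injective_mulVecLin_transpose_of_rank_eq {K m n : Type*} [Field K] [Fintype m]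
    [Fintype n] {A : Matrix m n K} (hA : A.rank = Fintype.card m) :
    Function.Injective Aᵀ.mulVecLin := by
  have hrange : Module.finrank K (LinearMap.range Aᵀ.mulVecLin) = Fintype.card m :=
    (rank_transpose A).trans hA
  have := LinearMap.finrank_range_add_finrank_ker Aᵀ.mulVecLin
  rw [hrange, Module.finrank_fintype_fun_eq_card] at this
  rw [← LinearMap.ker_eq_bot, ← Submodule.finrank_eq_zero]
  omega

section MonomialSum

variable {d n : ℕ}

/-- `∑_I m_I ∏_{i ∈ I} D_i` over the `d`-subsets `I` of `Fin n`, each listed increasingly. -/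
def monomialSum (m : (Fin d → Fin n) → ℝ) (D : Fin n → ℝ) : ℝ :=
  ∑ f : Fin d → Fin n, if StrictMono f then (∏ i, D (f i)) * m f else 0

theorem continuous_monomialSum (m : (Fin d → Fin n) → ℝ) : Continuous (monomialSum m) := by
  refine continuous_finsetSum _ fun f _ => ?_
  split_ifs
  · exact (continuous_finsetProd _ fun i _ => continuous_apply (f i)).mul continuous_const
  · exact continuous_const

theorem monomialSum_neg (m : (Fin d → Fin n) → ℝ) (D : Fin n → ℝ) :
    monomialSum (-m) D = -monomialSum m D := by
  rw [monomialSum, monomialSum, ← sum_neg_distrib]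
  refine sum_congr rfl fun f _ => ?_
  split_ifs <;> simp

theorem monomialSum_pos {m : (Fin d → Fin n) → ℝ} (hm : ∀ f, StrictMono f → 0 ≤ m f)
    {f₀ : Fin d → Fin n} (hf₀ : StrictMono f₀) (hm₀ : m f₀ ≠ 0)
    {D : Fin n → ℝ} (hD : ∀ i, 0 < D i) : 0 < monomialSum m D := by
  have hprod : ∀ f : Fin d → Fin n, 0 < ∏ i, D (f i) := fun f => prod_pos fun i _ => hD (f i)
  refine sum_pos' (fun f _ => ?_) ⟨f₀, mem_univ f₀, ?_⟩
  · split_ifs with hf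
    exacts [mul_nonneg (hprod f).le (hm f hf), le_rfl]
  · rw [if_pos hf₀]
    exact mul_pos (hprod f₀) ((hm f₀ hf₀).lt_of_ne' hm₀)

theorem monomialSum_indicator_range (m : (Fin d → Fin n) → ℝ) {f : Fin d → Fin n}
    (hf : StrictMono f) :
    monomialSum m (fun i => if i ∈ Set.range f then 1 else 0) = m f := by
  have hcard : (univ.image f).card = d := by
    rw [card_image_of_injective _ hf.injective, card_univ, Fintype.card_fin]
  have hf_eq : f = (univ.image f).orderEmbOfFin hcard :=
    orderEmbOfFin_unique hcard (fun i => mem_image_of_mem f (mem_univ i)) hf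
  rw [monomialSum, Fintype.sum_eq_single f]
  · simp [hf]
  · intro g hgf
    split_ifs with hg
    · obtain ⟨i, hi⟩ : ∃ i, g i ∉ Set.range f := by
        by_contra! hsub
        refine hgf ((orderEmbOfFin_unique hcard (fun i => ?_) hg).trans hf_eq.symm)
        obtain ⟨j, hj⟩ := hsub i
        exact hj ▸ mem_image_of_mem f (mem_univ j)
      rw [prod_eq_zero (mem_univ i) (if_neg hi), zero_mul]
    · rfl

theorem exists_pos_monomialSum_mul_pos (m : (Fin d → Fin n) → ℝ) {f : Fin d → Fin n}
    (hf : StrictMono f) (hmf : m f ≠ 0) :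
    ∃ D : Fin n → ℝ, (∀ i, 0 < D i) ∧ 0 < monomialSum m D * m f := by
  set D : ℝ → Fin n → ℝ := fun ε i => if i ∈ Set.range f then 1 else ε
  have hD : Continuous fun ε => monomialSum m (D ε) * m f :=
    ((continuous_monomialSum m).comp
      (continuous_pi fun i => continuous_const.if_const _ continuous_id)).mul continuous_const
  have hD0 : monomialSum m (D 0) * m f = m f * m f := by
    rw [monomialSum_indicator_range m hf]
  have hnear : ∀ᶠ ε in nhds 0, 0 < monomialSum m (D ε) * m f :=
    (hD.tendsto 0).eventually_const_lt (by rw [hD0]; exact mul_self_pos.2 hmf)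
  have hright : ∀ᶠ ε in nhdsWithin (0 : ℝ) (Set.Ioi 0), 0 < ε := self_mem_nhdsWithin
  obtain ⟨ε, hε_pos, hε⟩ := (hright.and (hnear.filter_mono nhdsWithin_le_nhds)).exists
  refine ⟨D ε, fun i => ?_, hε⟩
  simp only [D]
  split_ifs
  exacts [one_pos, hε_pos]

theorem forall_monomialSum_ne_zero_iff (m : (Fin d → Fin n) → ℝ) :
    (∀ D : Fin n → ℝ, (∀ i, 0 < D i) → monomialSum m D ≠ 0) ↔
      ((∀ f, StrictMono f → 0 ≤ m f) ∨ (∀ f, StrictMono f → m f ≤ 0)) ∧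
        ∃ f, StrictMono f ∧ m f ≠ 0 := by
  constructor
  · intro h
    refine ⟨?_, ?_⟩
    · by_contra! hmixed
      obtain ⟨⟨g, hg, hmg⟩, ⟨f, hf, hmf⟩⟩ := hmixed
      obtain ⟨D₁, hD₁, h₁⟩ := exists_pos_monomialSum_mul_pos m hf hmf.ne'
      obtain ⟨D₂, hD₂, h₂⟩ := exists_pos_monomialSum_mul_pos m hg hmg.ne
      have horthant : IsPreconnected (Set.univ.pi fun _ : Fin n => Set.Ioi (0 : ℝ)) :=
        isPreconnected_univ_pi fun _ => isPreconnected_Ioi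
      obtain ⟨D, hD, hD0⟩ := horthant.intermediate_value (a := D₂) (b := D₁)
        (by simpa using hD₂) (by simpa using hD₁) (continuous_monomialSum m).continuousOn
        ⟨(neg_of_mul_pos_left h₂ hmg.le).le, (pos_of_mul_pos_left h₁ hmf.le).le⟩
      exact h D (by simpa using hD) hD0
    · by_contra! hzero
      refine h 1 (fun _ => one_pos) (sum_eq_zero fun f _ => ?_)
      split_ifs with hf
      · rw [hzero f hf, mul_zero]
      · rfl
  · rintro ⟨hsign | hsign, f₀, hf₀, hm₀⟩ D hD
    · exact (monomialSum_pos hsign hf₀ hm₀ hD).ne'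
    · have := monomialSum_pos (m := -m) (fun f hf => neg_nonneg.2 (hsign f hf)) hf₀
        (neg_ne_zero.2 hm₀) hD
      rw [monomialSum_neg] at this
      exact neg_ne_zero.1 this.ne'

end MonomialSum

theorem det_mul_diagonal_mul_transpose_eq_monomialSum {d n : ℕ} (W Wt : Matrix (Fin d) (Fin n) ℝ)
    (D : Fin n → ℝ) :
    (W * diagonal D * Wtᵀ).det = monomialSum (fun f => minor W f * minor Wt f) D := by
  rw [Matrix.mul_assoc, det_mul_eq_sum_strictMono, monomialSum]
  refine sum_congr rfl fun f _ => ?_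
  split_ifs
  · have hsub : (diagonal D * Wtᵀ).submatrix f id = diagonal (D ∘ f) * (Wt.submatrix id f)ᵀ := by
      ext i j
      simp [diagonal_mul]
    rw [hsub, det_mul, det_diagonal, det_transpose]
    simp only [minor, Function.comp_apply]
    ring
  · rfl

section Signs

variable {d n : ℕ}

theorem signVec_eq_zero_iff {x : Fin n → ℝ} : signVec x = 0 ↔ x = 0 := by
  simp only [funext_iff, signVec, Pi.zero_apply, sign_eq_zero_iff]

theorem exists_pos_mul_eq_of_sign_eq {a b : ℝ} (h : SignType.sign a = SignType.sign b) :
    ∃ c, 0 < c ∧ a = c * b := by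
  rcases lt_trichotomy b 0 with hb | rfl | hb
  · have ha : a < 0 := by rwa [sign_neg hb, sign_eq_neg_one_iff] at h
    exact ⟨a / b, div_pos_of_neg_of_neg ha hb, (div_mul_cancel₀ a hb.ne).symm⟩
  · exact ⟨1, one_pos, by simpa using h⟩
  · have ha : 0 < a := by rwa [sign_pos hb, sign_eq_one_iff] at h
    exact ⟨a / b, div_pos ha hb, (div_mul_cancel₀ a hb.ne').symm⟩

theorem orthSet_ker_eq_range_transpose (A : Matrix (Fin d) (Fin n) ℝ) :
    orthSet (LinearMap.ker A.mulVecLin : Set (Fin n → ℝ)) = LinearMap.range Aᵀ.mulVecLin := by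
  ext v
  constructor
  · intro hv
    obtain ⟨ψ, hψ⟩ : dotProductEquiv ℝ (Fin n) v ∈ LinearMap.range A.mulVecLin.dualMap := by
      rw [LinearMap.range_dualMap_eq_dualAnnihilator_ker, Submodule.mem_dualAnnihilator]
      intro u hu
      simpa [dotProduct, mul_comm] using hv u hu
    set y := (dotProductEquiv ℝ (Fin d)).symm ψ
    have hy : ψ = dotProductEquiv ℝ (Fin d) y :=
      ((dotProductEquiv ℝ (Fin d)).apply_symm_apply ψ).symm
    refine ⟨y, dotProduct_eq_iff.1 fun u => ?_⟩
    simpa [hy, dotProduct_mulVec] using LinearMap.congr_fun hψ u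
  · rintro ⟨y, rfl⟩ u hu
    have hAu : A *ᵥ u = 0 := hu
    change u ⬝ᵥ (Aᵀ *ᵥ y) = 0
    rw [dotProduct_comm, mulVec_transpose, ← dotProduct_mulVec, hAu, dotProduct_zero]

theorem signSet_ker_inter_orthSet_ker_eq_zero_iff (W Wt : Matrix (Fin d) (Fin n) ℝ)
    (hWt : Function.Injective Wtᵀ.mulVecLin) :
    signSet (LinearMap.ker W.mulVecLin : Set (Fin n → ℝ)) ∩
        signSet (orthSet (LinearMap.ker Wt.mulVecLin : Set (Fin n → ℝ))) = {0} ↔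
      ∀ D : Fin n → ℝ, (∀ i, 0 < D i) → (W * diagonal D * Wtᵀ).det ≠ 0 := by
  have hWD : ∀ D y, (W * diagonal D * Wtᵀ) *ᵥ y = W *ᵥ (D * Wtᵀ *ᵥ y) := fun D y => by
    rw [← mulVec_mulVec, ← mulVec_mulVec]
    congr 1
    ext i
    exact mulVec_diagonal D _ i
  have hzero : (0 : Fin n → SignType) ∈ signSet (LinearMap.ker W.mulVecLin : Set (Fin n → ℝ)) ∩
      signSet (orthSet (LinearMap.ker Wt.mulVecLin : Set (Fin n → ℝ))) :=
    ⟨⟨0, zero_mem _, signVec_eq_zero_iff.2 rfl⟩, ⟨0, fun u _ => by simp, signVec_eq_zero_iff.2 rfl⟩⟩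
  rw [orthSet_ker_eq_range_transpose] at hzero ⊢
  rw [Set.eq_singleton_iff_unique_mem, and_iff_right hzero]
  constructor
  · intro h D hD hdet
    obtain ⟨y, hy0, hy⟩ := exists_mulVec_eq_zero_iff.2 hdet
    have hsign : signVec (D * Wtᵀ *ᵥ y) = signVec (Wtᵀ *ᵥ y) := funext fun i => by
      simp [signVec, sign_mul, sign_pos (hD i)]
    have hx : D * Wtᵀ *ᵥ y ∈ LinearMap.ker W.mulVecLin := (hWD D y).symm.trans hy
    have hv := h _ ⟨⟨_, hx, rfl⟩, ⟨_, ⟨y, rfl⟩, hsign.symm⟩⟩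
    rw [hsign, signVec_eq_zero_iff] at hv
    exact hy0 (hWt (by rw [map_zero]; exact hv))
  · rintro h σ ⟨⟨x, hx, rfl⟩, ⟨_, ⟨y, rfl⟩, hσ⟩⟩
    by_contra hne
    choose c hc hxc using fun i => exists_pos_mul_eq_of_sign_eq (congrFun hσ.symm i)
    refine h c hc (exists_mulVec_eq_zero_iff.1 ⟨y, ?_, ?_⟩)
    · rintro rfl
      exact hne (signVec_eq_zero_iff.2 (funext fun i => by simpa using hxc i))
    · have hcx : c * Wtᵀ *ᵥ y = x := funext fun i => (hxc i).symm
      rw [hWD, hcx]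
      exact hx

end Signs

theorem stmt3_general {d n : ℕ}
    (S St : Submodule ℝ (Fin n → ℝ))
    (W Wt : Matrix (Fin d) (Fin n) ℝ) (hWt : Wt.rank = d)
    (hkW : LinearMap.ker W.mulVecLin = S) (hkWt : LinearMap.ker Wt.mulVecLin = St) :
    signSet (S : Set (Fin n → ℝ)) ∩ signSet (orthSet (St : Set (Fin n → ℝ))) = {0} ↔
    (((∀ f : Fin d → Fin n, StrictMono f → 0 ≤ minor W f * minor Wt f) ∨
      (∀ f : Fin d → Fin n, StrictMono f → minor W f * minor Wt f ≤ 0)) ∧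
     (∃ f : Fin d → Fin n, StrictMono f ∧ minor W f * minor Wt f ≠ 0)) := by
  subst hkW hkWt
  have hinj := injective_mulVecLin_transpose_of_rank_eq (hWt.trans (Fintype.card_fin d).symm)
  rw [signSet_ker_inter_orthSet_ker_eq_zero_iff W Wt hinj, ← forall_monomialSum_ne_zero_iff]
  simp only [det_mul_diagonal_mul_transpose_eq_monomialSum]

/-- for subspaces `S, S̃` of dimension `n - d` and matrices `W, W̃` of full
rank `d` with kernels `S, S̃`: `sign(S) ∩ sign(S̃⊥) = {0}` iff the products of maximal
minors are all `≥ 0` or all `≤ 0`, and nonzero for at least one choice of columns. -/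
theorem stmt3 {d n : ℕ} (hdn : d ≤ n)
    (S St : Submodule ℝ (Fin n → ℝ))
    (hS : Module.finrank ℝ S = n - d) (hSt : Module.finrank ℝ St = n - d)
    (W Wt : Matrix (Fin d) (Fin n) ℝ) (hW : W.rank = d) (hWt : Wt.rank = d)
    (hkW : LinearMap.ker W.mulVecLin = S) (hkWt : LinearMap.ker Wt.mulVecLin = St) :
    signSet (S : Set (Fin n → ℝ)) ∩ signSet (orthSet (St : Set (Fin n → ℝ))) = {0} ↔
    (((∀ f : Fin d → Fin n, StrictMono f → 0 ≤ minor W f * minor Wt f) ∨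
      (∀ f : Fin d → Fin n, StrictMono f → minor W f * minor Wt f ≤ 0)) ∧
     (∃ f : Fin d → Fin n, StrictMono f ∧ minor W f * minor Wt f ≠ 0)) :=
  stmt3_general S St W Wt hWt hkW hkWt
end
end

section
/- If sign(S) = sign(S̃) and there exists a vector v ∈ S⊥ with all components positive, then for every c > 0 the map F_c is a bijection from ℝ^d onto C°. -/
/-!
Write `F_c x = W u(x)` with `u(x) = c ∘ exp (W̃ᵀ x) > 0`. The sign condition yields one key fact:
if `z ∈ ker W` has the sign of `W̃ᵀ e` wherever `W̃ᵀ e` is nonzero, then `W̃ᵀ e = 0`, because a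
`z̃ ∈ ker W̃` with the signs of `z` makes `z̃ · W̃ᵀ e = 0` a sum of nonnegative terms. Applied to
`u(x) - u(y)` it gives injectivity; applied to the differential `z ↦ W (u(x) * W̃ᵀ z)` it makes
`F_c` a local diffeomorphism, hence an open map. The range lies in the connected open set `C°`, so
it remains to see that it is relatively closed there. If `F_c x_k → y ∈ C°`, then
`v · u(x_k) = ψ (F_c x_k)` is bounded (where `v = Wᵀ ψ`), so the `u(x_k)` stay in a box. Were the
`x_k` unbounded, a limit direction `e` of `x_k / ‖x_k‖` and a limit `u*` of `u(x_k)` would satisfy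
`W̃ᵀ e ≤ 0`, `u*_j = 0` wherever `(W̃ᵀ e)_j < 0`, and `W u* = y = W ū` with `ū > 0`; the key fact
for `z = u* - ū` then forces `W̃ᵀ e = 0`, i.e. `e = 0`, although `‖e‖ = 1`.
-/

open scoped BigOperators

noncomputable section

open Matrix Filter Topology Set Function Metric

section SignVectors

theorem StrictMono.sign_sub {α β : Type*} [AddCommGroup α] [LinearOrder α] [IsOrderedAddMonoid α]
    [AddCommGroup β] [LinearOrder β] [IsOrderedAddMonoid β] {f : α → β} (hf : StrictMono f)
    (a b : α) : SignType.sign (f a - f b) = SignType.sign (a - b) := by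
  rcases lt_trichotomy a b with h | rfl | h
  · rw [sign_neg (sub_neg.2 (hf h)), sign_neg (sub_neg.2 h)]
  · simp
  · rw [sign_pos (sub_pos.2 (hf h)), sign_pos (sub_pos.2 h)]

theorem eq_zero_of_dotProduct_eq_zero_of_sign_eq {ι : Type*} [Fintype ι] {z p : ι → ℝ}
    (h : z ⬝ᵥ p = 0) (hsign : ∀ j, p j ≠ 0 → SignType.sign (z j) = SignType.sign (p j)) :
    p = 0 := by
  have hpos : ∀ j, p j ≠ 0 → 0 < z j * p j := fun j hj => by
    rw [← sign_eq_one_iff, sign_mul, hsign j hj, ← sign_mul, sign_pos (mul_self_pos.2 hj)]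
  have hnonneg : ∀ j ∈ Finset.univ, 0 ≤ z j * p j := fun j _ => by
    by_cases hj : p j = 0
    · simp [hj]
    · exact (hpos j hj).le
  funext j
  by_contra hj
  exact (hpos j hj).ne' ((Finset.sum_eq_zero_iff_of_nonneg hnonneg).1 h j (Finset.mem_univ j))

variable {d d' n : ℕ} {W : Matrix (Fin d) (Fin n) ℝ} {Wt : Matrix (Fin d') (Fin n) ℝ}

theorem vecMul_eq_zero_of_sign_eq (hsign : signSet (kerSet W) = signSet (kerSet Wt))
    {z : Fin n → ℝ} (hz : W *ᵥ z = 0) {e : Fin d' → ℝ}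
    (hze : ∀ j, (e ᵥ* Wt) j ≠ 0 → SignType.sign (z j) = SignType.sign ((e ᵥ* Wt) j)) :
    e ᵥ* Wt = 0 := by
  obtain ⟨zt, hzt, hsame⟩ : signVec z ∈ signSet (kerSet Wt) := hsign ▸ ⟨z, hz, rfl⟩
  refine eq_zero_of_dotProduct_eq_zero_of_sign_eq (z := zt) ?_ fun j hj => ?_
  · rw [dotProduct_comm, ← dotProduct_mulVec, show Wt *ᵥ zt = 0 from hzt, dotProduct_zero]
  · rw [← hze j hj]
    exact congrFun hsame j

end SignVectors

section Rank

variable {m n K : Type*} [Field K] [Fintype m] [Fintype n] {A : Matrix m n K}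

theorem Matrix.mulVec_surjective_of_rank_eq (h : A.rank = Fintype.card m) :
    Surjective A.mulVec := by
  change Surjective A.mulVecLin
  rw [← LinearMap.range_eq_top]
  apply Submodule.eq_top_of_finrank_eq
  rw [← Matrix.rank, h, Module.finrank_fintype_fun_eq_card]

theorem Matrix.vecMul_injective_of_rank_eq (h : A.rank = Fintype.card m) :
    Injective A.vecMul := by
  rw [vecMul_injective_iff, linearIndependent_iff_card_eq_finrank_span, Set.finrank,
    ← rank_eq_finrank_span_row, h]

end Rank

section Cone

variable {d n : ℕ} {W : Matrix (Fin d) (Fin n) ℝ}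

theorem coneOf_eq_image (W : Matrix (Fin d) (Fin n) ℝ) : coneOf W = W.mulVecLin '' Ici 0 := by
  ext y
  constructor
  · rintro ⟨u, hu, rfl⟩
    exact ⟨u, hu, by ext i; simp [mulVec, dotProduct, mul_comm]⟩
  · rintro ⟨u, hu, rfl⟩
    exact ⟨u, hu, by ext i; simp [mulVec, dotProduct, mul_comm]⟩

theorem convex_coneOf (W : Matrix (Fin d) (Fin n) ℝ) : Convex ℝ (coneOf W) := by
  rw [coneOf_eq_image]
  exact (convex_Ici 0).linear_image W.mulVecLin

theorem mulVec_mem_interior_coneOf (hW : Surjective W.mulVec) {u : Fin n → ℝ}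
    (hu : ∀ j, 0 < u j) : W *ᵥ u ∈ interior (coneOf W) := by
  have hopen : IsOpen (W.mulVecLin '' univ.pi fun _ => Ioi 0) :=
    W.mulVecLin.isOpenMap_of_finiteDimensional hW _
      (isOpen_set_pi finite_univ fun _ _ => isOpen_Ioi)
  refine interior_maximal ?_ hopen ⟨u, fun j _ => hu j, rfl⟩
  rw [coneOf_eq_image]
  exact image_mono fun u hu j => (hu j (mem_univ j)).le

theorem exists_pos_of_mem_interior_coneOf {y : Fin d → ℝ} (hy : y ∈ interior (coneOf W)) :
    ∃ u : Fin n → ℝ, (∀ j, 0 < u j) ∧ W *ᵥ u = y := by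
  have hlim : Tendsto (fun δ : ℝ => y - δ • W *ᵥ 1) (𝓝[>] 0) (𝓝 y) := by
    have : Continuous fun δ : ℝ => y - δ • W *ᵥ 1 := by fun_prop
    simpa using (this.tendsto 0).mono_left nhdsWithin_le_nhds
  rw [coneOf_eq_image] at hy
  obtain ⟨δ, ⟨u, hu, huy⟩, hδ⟩ :=
    ((hlim.eventually (mem_interior_iff_mem_nhds.1 hy)).and self_mem_nhdsWithin).exists
  refine ⟨u + δ • 1, fun j => add_pos_of_nonneg_of_pos (hu j) (by simpa using hδ), ?_⟩
  rw [mulVec_add, mulVec_smul, show W *ᵥ u = _ from huy, sub_add_cancel]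

end Cone

section OpenMap

variable {𝕜 E : Type*} [NontriviallyNormedField 𝕜] [CompleteSpace 𝕜] [NormedAddCommGroup E]
  [NormedSpace 𝕜 E] [FiniteDimensional 𝕜 E]

theorem isOpenMap_of_hasStrictFDerivAt_injective {f : E → E} {f' : E → E →L[𝕜] E}
    (hf : ∀ x, HasStrictFDerivAt f (f' x) x) (hinj : ∀ x, Injective (f' x)) : IsOpenMap f :=
  have := FiniteDimensional.complete 𝕜 E
  isOpenMap_of_hasStrictFDerivAt_equiv
    (f' := fun x =>
      (LinearEquiv.ofInjectiveEndo (f' x : E →ₗ[𝕜] E) (hinj x)).toContinuousLinearEquiv) hf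

end OpenMap

section Fmap

variable {d dt n : ℕ} {W : Matrix (Fin d) (Fin n) ℝ} {Wt : Matrix (Fin dt) (Fin n) ℝ}
  {c : Fin n → ℝ}

def expCoeffs (Wt : Matrix (Fin dt) (Fin n) ℝ) (c : Fin n → ℝ) (x : Fin dt → ℝ) : Fin n → ℝ :=
  fun j => c j * Real.exp ((x ᵥ* Wt) j)

theorem expCoeffs_pos (hc : ∀ j, 0 < c j) (x : Fin dt → ℝ) (j : Fin n) :
    0 < expCoeffs Wt c x j :=
  mul_pos (hc j) (Real.exp_pos _)

theorem Fmap_eq_mulVec_expCoeffs (W : Matrix (Fin d) (Fin n) ℝ) (Wt : Matrix (Fin dt) (Fin n) ℝ)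
    (c : Fin n → ℝ) (x : Fin dt → ℝ) : Fmap W Wt c x = W *ᵥ expCoeffs Wt c x := by
  ext i
  simp only [Fmap, expCoeffs, mulVec, dotProduct, vecMul]
  exact Finset.sum_congr rfl fun j _ => by simp only [mul_comm (x _)]; ring

theorem hasStrictFDerivAt_expCoeffs (Wt : Matrix (Fin dt) (Fin n) ℝ) (c : Fin n → ℝ)
    (x : Fin dt → ℝ) :
    HasStrictFDerivAt (expCoeffs Wt c) (ContinuousLinearMap.pi fun j =>
      expCoeffs Wt c x j • (ContinuousLinearMap.proj j ∘L Wt.vecMulLinear.toContinuousLinearMap))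
      x := by
  refine hasStrictFDerivAt_pi.2 fun j => ?_
  simpa [expCoeffs, smul_smul] using
    ((ContinuousLinearMap.proj j ∘L Wt.vecMulLinear.toContinuousLinearMap).hasStrictFDerivAt
      (x := x)).exp.const_mul (c j)

theorem Fmap_injective (hWt : Injective Wt.vecMul)
    (hsign : signSet (kerSet W) = signSet (kerSet Wt)) (hc : ∀ j, 0 < c j) :
    Injective (Fmap W Wt c) := by
  intro x y hxy
  rw [← sub_eq_zero, ← hWt.eq_iff, zero_vecMul]
  refine vecMul_eq_zero_of_sign_eq hsign (z := expCoeffs Wt c x - expCoeffs Wt c y) ?_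
    fun j _ => ?_
  · rwa [mulVec_sub, sub_eq_zero, ← Fmap_eq_mulVec_expCoeffs, ← Fmap_eq_mulVec_expCoeffs]
  · simp only [expCoeffs, Pi.sub_apply, sub_vecMul, ← mul_sub, sign_mul, sign_pos (hc j),
      one_mul]
    exact Real.exp_strictMono.sign_sub _ _

theorem isOpenMap_Fmap {W Wt : Matrix (Fin d) (Fin n) ℝ} (hWt : Injective Wt.vecMul)
    (hsign : signSet (kerSet W) = signSet (kerSet Wt)) (hc : ∀ j, 0 < c j) :
    IsOpenMap (Fmap W Wt c) := by
  rw [funext (Fmap_eq_mulVec_expCoeffs W Wt c)]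
  refine isOpenMap_of_hasStrictFDerivAt_injective
    (fun x => W.mulVecLin.toContinuousLinearMap.hasStrictFDerivAt.comp x
      (hasStrictFDerivAt_expCoeffs Wt c x))
    fun x => (injective_iff_map_eq_zero _).2 fun z hz => ?_
  apply hWt
  simp only [zero_vecMul]
  refine vecMul_eq_zero_of_sign_eq hsign hz fun j _ => ?_
  simp [sign_mul, sign_pos (expCoeffs_pos hc x j)]

theorem continuous_Fmap (W : Matrix (Fin d) (Fin n) ℝ) (Wt : Matrix (Fin dt) (Fin n) ℝ)
    (c : Fin n → ℝ) : Continuous (Fmap W Wt c) := by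
  unfold Fmap
  fun_prop

theorem range_Fmap_subset_interior_coneOf (hW : Surjective W.mulVec) (hc : ∀ j, 0 < c j) :
    range (Fmap W Wt c) ⊆ interior (coneOf W) := by
  rintro _ ⟨x, rfl⟩
  rw [Fmap_eq_mulVec_expCoeffs]
  exact mulVec_mem_interior_coneOf hW (expCoeffs_pos hc x)

end Fmap

section Asymptotics

theorem nonpos_of_tendsto_mul_exp_mul {α : Type*} {l : Filter α} [l.NeBot] {r a : α → ℝ}
    {C p L : ℝ} (hC : 0 < C) (hr : Tendsto r l atTop) (ha : Tendsto a l (𝓝 p))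
    (hL : Tendsto (fun k => C * Real.exp (r k * a k)) l (𝓝 L)) : p ≤ 0 := by
  by_contra! hp
  exact not_tendsto_nhds_of_tendsto_atTop
    ((Real.tendsto_exp_atTop.comp (hr.atTop_mul_pos hp ha)).const_mul_atTop hC) L hL

theorem eq_zero_of_tendsto_mul_exp_mul {α : Type*} {l : Filter α} [l.NeBot] {r a : α → ℝ}
    {C p L : ℝ} (hr : Tendsto r l atTop) (ha : Tendsto a l (𝓝 p)) (hp : p < 0)
    (hL : Tendsto (fun k => C * Real.exp (r k * a k)) l (𝓝 L)) : L = 0 := by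
  have := (Real.tendsto_exp_atBot.comp (hr.atTop_mul_neg hp ha)).const_mul C
  rw [mul_zero] at this
  exact tendsto_nhds_unique hL this

theorem le_dotProduct_div {ι : Type*} [Fintype ι] {v u : ι → ℝ} (hv : ∀ j, 0 < v j)
    (hu : ∀ j, 0 ≤ u j) (j : ι) : u j ≤ v ⬝ᵥ u / v j := by
  rw [le_div_iff₀ (hv j), mul_comm]
  exact Finset.single_le_sum (fun i _ => mul_nonneg (hv i).le (hu i)) (Finset.mem_univ j)

variable {d d' n : ℕ} {W : Matrix (Fin d) (Fin n) ℝ}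

theorem exists_dual_mulVec_eq_dotProduct {v : Fin n → ℝ} (hv : v ∈ orthSet (kerSet W)) :
    ∃ ψ : Module.Dual ℝ (Fin d → ℝ), ∀ u, ψ (W *ᵥ u) = v ⬝ᵥ u := by
  have hmem : dotProductBilin ℝ ℝ v ∈ (LinearMap.ker W.mulVecLin).dualAnnihilator :=
    (Submodule.mem_dualAnnihilator _).2 fun u hu => by
      simpa [dotProduct, mul_comm] using hv u hu
  rw [← LinearMap.range_dualMap_eq_dualAnnihilator_ker] at hmem
  obtain ⟨ψ, hψ⟩ := hmem
  exact ⟨ψ, fun u => LinearMap.congr_fun hψ u⟩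

theorem vecMul_eq_zero_of_nonpos_of_mulVec_mem_interior {Wt : Matrix (Fin d') (Fin n) ℝ}
    (hsign : signSet (kerSet W) = signSet (kerSet Wt)) {u : Fin n → ℝ}
    (hu : W *ᵥ u ∈ interior (coneOf W)) {e : Fin d' → ℝ} (hneg : ∀ j, (e ᵥ* Wt) j ≤ 0)
    (hzero : ∀ j, (e ᵥ* Wt) j < 0 → u j = 0) : e ᵥ* Wt = 0 := by
  obtain ⟨u₀, hu₀, hWu₀⟩ := exists_pos_of_mem_interior_coneOf hu
  refine vecMul_eq_zero_of_sign_eq hsign (z := u - u₀) (by rw [mulVec_sub, hWu₀, sub_self])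
    fun j hj => ?_
  have hj' : (e ᵥ* Wt) j < 0 := (hneg j).lt_of_ne hj
  rw [sign_neg hj', Pi.sub_apply, hzero j hj', zero_sub, sign_neg (neg_neg_of_pos (hu₀ j))]

end Asymptotics

section Properness

variable {d n : ℕ} {W Wt : Matrix (Fin d) (Fin n) ℝ} {c v : Fin n → ℝ}

theorem not_tendsto_norm_atTop_of_tendsto_Fmap (hWt : Injective Wt.vecMul)
    (hsign : signSet (kerSet W) = signSet (kerSet Wt)) (hv : v ∈ orthSet (kerSet W))
    (hvpos : ∀ j, 0 < v j) (hc : ∀ j, 0 < c j) {y : Fin d → ℝ} (hy : y ∈ interior (coneOf W))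
    {x : ℕ → Fin d → ℝ} (hx : Tendsto (Fmap W Wt c ∘ x) atTop (𝓝 y)) :
    ¬ Tendsto (fun k => ‖x k‖) atTop atTop := by
  intro hnorm
  set u := fun k => expCoeffs Wt c (x k)
  have hWu : ∀ k, W *ᵥ u k = Fmap W Wt c (x k) := fun k => (Fmap_eq_mulVec_expCoeffs ..).symm
  obtain ⟨M, hM⟩ : ∃ M, ∀ k, v ⬝ᵥ u k ≤ M := by
    obtain ⟨ψ, hψ⟩ := exists_dual_mulVec_eq_dotProduct hv
    obtain ⟨M, hM⟩ := ((ψ.continuous_of_finiteDimensional.tendsto y).comp hx).bddAbove_range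
    exact ⟨M, fun k => hψ (u k) ▸ hWu k ▸ hM (mem_range_self k)⟩
  have hbox : ∀ k, u k ∈ univ.pi fun j => Icc 0 (M / v j) := fun k j _ =>
    ⟨(expCoeffs_pos hc _ j).le,
      (le_dotProduct_div hvpos (fun j => (expCoeffs_pos hc _ j).le) j).trans
        (div_le_div_of_nonneg_right (hM k) (hvpos j).le)⟩
  have hmem : ∀ᶠ k in atTop,
      (‖x k‖⁻¹ • x k, u k) ∈ sphere 0 1 ×ˢ univ.pi fun j => Icc 0 (M / v j) :=
    (hnorm.eventually_gt_atTop 0).mono fun k hk =>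
      ⟨by simpa using norm_smul_inv_norm (𝕜 := ℝ) (norm_pos_iff.1 hk), hbox k⟩
  obtain ⟨⟨e, u₀⟩, ⟨he, -⟩, φ, hφ, hlim⟩ :=
    ((isCompact_sphere 0 1).prod (isCompact_univ_pi fun _ => isCompact_Icc)).tendsto_subseq'
      hmem.frequently
  have hr : Tendsto (fun k => ‖x (φ k)‖) atTop atTop := hnorm.comp hφ.tendsto_atTop
  have hdir : ∀ j, Tendsto (fun k => ((‖x (φ k)‖⁻¹ • x (φ k)) ᵥ* Wt) j) atTop
      (𝓝 ((e ᵥ* Wt) j)) := fun j =>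
    (((continuous_apply j).comp (continuous_id.matrix_vecMul continuous_const)).tendsto e).comp
      hlim.fst_nhds
  have hcoef : ∀ j, Tendsto (fun k => c j * Real.exp (‖x (φ k)‖ *
      ((‖x (φ k)‖⁻¹ • x (φ k)) ᵥ* Wt) j)) atTop (𝓝 (u₀ j)) := fun j =>
    (((continuous_apply j).tendsto u₀).comp hlim.snd_nhds).congr'
      ((hr.eventually_gt_atTop 0).mono fun k hk => by
        simp only [u, expCoeffs, Function.comp_apply, smul_vecMul, Pi.smul_apply, smul_eq_mul,
          mul_inv_cancel_left₀ hk.ne'])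
  have hWu₀ : W *ᵥ u₀ = y :=
    tendsto_nhds_unique (((continuous_const.matrix_mulVec continuous_id).tendsto u₀).comp
      hlim.snd_nhds) (by simpa [Function.comp_def, hWu] using hx.comp hφ.tendsto_atTop)
  have he0 : e ᵥ* Wt = 0 ᵥ* Wt := by
    rw [zero_vecMul]
    refine vecMul_eq_zero_of_nonpos_of_mulVec_mem_interior hsign (hWu₀ ▸ hy)
      (fun j => nonpos_of_tendsto_mul_exp_mul (hc j) hr (hdir j) (hcoef j))
      fun j hj => eq_zero_of_tendsto_mul_exp_mul hr (hdir j) hj (hcoef j)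
  simp [hWt he0] at he

theorem mem_range_Fmap_of_mem_closure (hWt : Injective Wt.vecMul)
    (hsign : signSet (kerSet W) = signSet (kerSet Wt)) (hv : v ∈ orthSet (kerSet W))
    (hvpos : ∀ j, 0 < v j) (hc : ∀ j, 0 < c j) {y : Fin d → ℝ} (hy : y ∈ interior (coneOf W))
    (hcl : y ∈ closure (range (Fmap W Wt c))) : y ∈ range (Fmap W Wt c) := by
  obtain ⟨x, hx⟩ : ∃ x : ℕ → Fin d → ℝ, Tendsto (Fmap W Wt c ∘ x) atTop (𝓝 y) := by
    obtain ⟨s, hs, hlim⟩ := mem_closure_iff_seq_limit.1 hcl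
    choose x hx using hs
    exact ⟨x, by simpa [Function.comp_def, hx] using hlim⟩
  obtain ⟨B, hB⟩ : ∃ B, ∃ᶠ k in atTop, ‖x k‖ ≤ B := by
    by_contra! h
    exact not_tendsto_norm_atTop_of_tendsto_Fmap hWt hsign hv hvpos hc hy hx
      (tendsto_atTop.2 fun B => (h B).mono fun _ => le_of_lt)
  obtain ⟨x₀, -, φ, hφ, hlim⟩ :=
    (isCompact_closedBall (0 : Fin d → ℝ) B).tendsto_subseq' (by simpa using hB)
  exact ⟨x₀, tendsto_nhds_unique (((continuous_Fmap W Wt c).tendsto x₀).comp hlim)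
    (hx.comp hφ.tendsto_atTop)⟩

end Properness

theorem stmt5_general {d n : ℕ}
    (W Wt : Matrix (Fin d) (Fin n) ℝ) (hW : W.rank = d) (hWt : Wt.rank = d)
    (hsign : signSet (kerSet W) = signSet (kerSet Wt))
    (hv : ∃ v ∈ orthSet (kerSet W), ∀ i, 0 < v i) :
    ∀ c : Fin n → ℝ, (∀ j, 0 < c j) →
      Function.Injective (Fmap W Wt c) ∧
      Set.range (Fmap W Wt c) = interior (coneOf W) := by
  intro c hc
  obtain ⟨v, hvS, hvpos⟩ := hv
  have hWt' := vecMul_injective_of_rank_eq (hWt.trans (Fintype.card_fin d).symm)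
  have hsub := range_Fmap_subset_interior_coneOf (Wt := Wt)
    (mulVec_surjective_of_rank_eq (hW.trans (Fintype.card_fin d).symm)) hc
  refine ⟨Fmap_injective hWt' hsign hc, hsub.antisymm ?_⟩
  exact (convex_coneOf W).interior.isPreconnected.subset_of_closure_inter_subset
    (isOpenMap_Fmap hWt' hsign hc).isOpen_range ⟨_, hsub (mem_range_self 0), mem_range_self 0⟩
    fun y ⟨hcl, hy⟩ => mem_range_Fmap_of_mem_closure hWt' hsign hvS hvpos hc hy hcl

/-- if `sign(S) = sign(S̃)` and there is a strictly positive vector in `S⊥`,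
then `F_c` is a bijection from `ℝ^d` onto the interior of `C = cone W`, for all `c > 0`. -/
theorem stmt5 {d n : ℕ} (hd : 1 ≤ d) (hdn : d ≤ n)
    (W Wt : Matrix (Fin d) (Fin n) ℝ) (hW : W.rank = d) (hWt : Wt.rank = d)
    (hsign : signSet (kerSet W) = signSet (kerSet Wt))
    (hv : ∃ v ∈ orthSet (kerSet W), ∀ i, 0 < v i) :
    ∀ c : Fin n → ℝ, (∀ j, 0 < c j) →
      Function.Injective (Fmap W Wt c) ∧
      Set.range (Fmap W Wt c) = interior (coneOf W) :=
  stmt5_general W Wt hW hWt hsign hv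
end
end

section
/- Let U ⊆ ℝ^d be open and let F : ℝ^d → ℝ^d be continuous with F(ℝ^d) ⊆ U. Then the preimage under F of every compact subset of U is compact if and only if the following holds: for every sequence (x_k) in ℝ^d with |x_k| = 1 for all k and x_k → x for some x, every sequence (t_k) of positive reals with t_k → ∞, and every y ∈ ℝ^d, if F(t_k · x_k) → y as k → ∞, then y lies in the frontier ∂U of U. -/
open Filter Topology

/-! A sequence escapes every compact subset of `ℝ^d` exactly when its norms tend to `∞`, and by
compactness of the unit sphere it then has a subsequence of the form `t_k • x_k` with
`‖x_k‖ = 1`, `x_k → x₀`, `t_k → ∞`. If `F` is proper into `U`, the images of an escaping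
sequence leave every compact neighbourhood (inside `U`) of each point of `U`, so their limits
lie in `closure U \ U = frontier U`. Conversely, an unbounded `F ⁻¹' K` with `K ⊆ U` compact
would give such a sequence whose images have a limit in `K`, hence in `U`, not in `frontier U`. -/

section ProperInto

variable {ι α X : Type*} [TopologicalSpace α] [TopologicalSpace X] {F : α → X} {U : Set X}

theorem notMem_of_tendsto_cocompact_of_isCompact_preimage [LocallyCompactSpace X]
    (hU : IsOpen U) (hF : ∀ K ⊆ U, IsCompact K → IsCompact (F ⁻¹' K))
    {l : Filter ι} [l.NeBot] {z : ι → α} (hz : Tendsto z l (cocompact α)) {y : X}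
    (hy : Tendsto (F ∘ z) l (𝓝 y)) : y ∉ U := by
  intro hyU
  obtain ⟨K, hK, hyK, hKU⟩ := exists_compact_subset hU hyU
  have hin : ∀ᶠ i in l, z i ∈ F ⁻¹' K := hy (mem_interior_iff_mem_nhds.mp hyK)
  have hout : ∀ᶠ i in l, z i ∉ F ⁻¹' K := hz (hF K hKU hK).compl_mem_cocompact
  obtain ⟨i, hi, hi'⟩ := (hin.and hout).exists
  exact hi' hi

theorem mem_frontier_of_tendsto_cocompact_of_isCompact_preimage [LocallyCompactSpace X]
    (hU : IsOpen U) (hF : ∀ K ⊆ U, IsCompact K → IsCompact (F ⁻¹' K))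
    (hrange : Set.range F ⊆ U) {l : Filter ι} [l.NeBot] {z : ι → α}
    (hz : Tendsto z l (cocompact α)) {y : X} (hy : Tendsto (F ∘ z) l (𝓝 y)) :
    y ∈ frontier U := by
  rw [hU.frontier_eq]
  exact ⟨mem_closure_of_tendsto hy (Eventually.of_forall fun _ => hrange ⟨_, rfl⟩),
    notMem_of_tendsto_cocompact_of_isCompact_preimage hU hF hz hy⟩

end ProperInto

section Normed

variable {ι E : Type*} [NormedAddCommGroup E]

theorem exists_seq_lt_norm_of_not_isBounded {s : Set E} (hs : ¬Bornology.IsBounded s) :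
    ∃ z : ℕ → E, (∀ k, z k ∈ s) ∧ ∀ k : ℕ, (k : ℝ) < ‖z k‖ := by
  rw [isBounded_iff_forall_norm_le] at hs
  push Not at hs
  choose z hzs hz using fun k : ℕ => hs k
  exact ⟨z, hzs, hz⟩

variable [NormedSpace ℝ E]

theorem tendsto_smul_cocompact_of_norm_eq_one {l : Filter ι} {x : ι → E} (hx : ∀ i, ‖x i‖ = 1)
    {t : ι → ℝ} (ht : Tendsto t l atTop) : Tendsto (fun i => t i • x i) l (cocompact E) := by
  refine (tendsto_norm_atTop_iff_cobounded.mp ?_).mono_right Metric.cobounded_le_cocompact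
  simpa only [norm_smul, hx, mul_one, Real.norm_eq_abs, Function.comp_def] using
    tendsto_abs_atTop_atTop.comp ht

variable [ProperSpace E] {X : Type*} [TopologicalSpace X] [T2Space X] [FirstCountableTopology X]

theorem isCompact_preimage_of_forall_tendsto_smul_mem_frontier {F : E → X} (hF : Continuous F)
    {U : Set X} (hU : IsOpen U)
    (hfront : ∀ (x : ℕ → E) (x₀ : E), (∀ k, ‖x k‖ = 1) → Tendsto x atTop (𝓝 x₀) →
      ∀ t : ℕ → ℝ, (∀ k, 0 < t k) → Tendsto t atTop atTop →
      ∀ y : X, Tendsto (fun k => F (t k • x k)) atTop (𝓝 y) → y ∈ frontier U)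
    {K : Set X} (hKU : K ⊆ U) (hK : IsCompact K) : IsCompact (F ⁻¹' K) := by
  refine Metric.isCompact_of_isClosed_isBounded (hK.isClosed.preimage hF) ?_
  by_contra hunb
  obtain ⟨z, hzK, hz⟩ := exists_seq_lt_norm_of_not_isBounded hunb
  have hz0 : ∀ k, z k ≠ 0 := fun k => norm_pos_iff.mp ((Nat.cast_nonneg k).trans_lt (hz k))
  obtain ⟨⟨x₀, y⟩, ⟨-, hyK⟩, φ, hφ, hlim⟩ :=
    ((isCompact_sphere (0 : E) 1).prod hK).tendsto_subseq
      (x := fun k => (‖z k‖⁻¹ • z k, F (z k)))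
      fun k => ⟨mem_sphere_zero_iff_norm.mpr (norm_smul_inv_norm (hz0 k)), hzK k⟩
  have ht : Tendsto (fun k => ‖z (φ k)‖) atTop atTop :=
    tendsto_atTop_mono (fun k => (Nat.cast_le.mpr hφ.le_apply).trans (hz _).le)
      tendsto_natCast_atTop_atTop
  have hy : y ∈ frontier U := by
    refine hfront _ x₀ (fun _ => norm_smul_inv_norm (hz0 _)) hlim.fst_nhds _
      (fun _ => norm_pos_iff.mpr (hz0 _)) ht y ?_
    simpa only [Function.comp_apply, RCLike.ofReal_real_eq_id, id,
      smul_inv_smul₀ (norm_ne_zero_iff.mpr (hz0 _))] using hlim.snd_nhds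
  exact (hU.frontier_eq ▸ hy).2 (hKU hyK)

end Normed

/-- a continuous map `F : ℝ^d → ℝ^d` with range contained in an open set `U`
is proper as a map into `U` iff whenever a sequence of points `t_k • x_k` with `|x_k| = 1`,
`x_k → x` and `t_k → ∞` has `F(t_k • x_k) → y`, the limit `y` lies in the frontier of `U`. -/
theorem stmt6 {d : ℕ} (U : Set (EuclideanSpace ℝ (Fin d))) (hU : IsOpen U)
    (F : EuclideanSpace ℝ (Fin d) → EuclideanSpace ℝ (Fin d))
    (hF : Continuous F) (hrange : Set.range F ⊆ U) :
    (∀ K : Set (EuclideanSpace ℝ (Fin d)), K ⊆ U → IsCompact K → IsCompact (F ⁻¹' K)) ↔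
    (∀ (x : ℕ → EuclideanSpace ℝ (Fin d)) (x₀ : EuclideanSpace ℝ (Fin d)),
      (∀ k, ‖x k‖ = 1) → Tendsto x atTop (𝓝 x₀) →
      ∀ t : ℕ → ℝ, (∀ k, 0 < t k) → Tendsto t atTop atTop →
      ∀ y : EuclideanSpace ℝ (Fin d),
        Tendsto (fun k => F (t k • x k)) atTop (𝓝 y) → y ∈ frontier U) :=
  ⟨fun hproper _ _ hx _ _ _ ht _ hy =>
      mem_frontier_of_tendsto_cocompact_of_isCompact_preimage hU hproper hrange
        (tendsto_smul_cocompact_of_norm_eq_one hx ht) hy,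
    fun hfront _ => isCompact_preimage_of_forall_tendsto_smul_mem_frontier hF hU hfront⟩
end

section
/- The ray condition — for every nonzero x ∈ ℝ^d and every c > 0, if F_c(t·x) converges to some y ∈ ℝ^d as t → ∞ then y ∈ ∂C — holds if and only if conditions (ii) and (iii) hold for the pair (S, S̃). -/
open scoped BigOperators

noncomputable section

/-- The partial order on sign vectors: `τ ≤ ρ` iff for each `i`, `τ i = 0` or `τ i = ρ i`. -/
def sleq {n : ℕ} (τ ρ : Fin n → SignType) : Prop := ∀ i, τ i = 0 ∨ τ i = ρ i

/-- The nonnegative elements (components in `{0,+}`) of a set of sign vectors. -/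
def plusPart {n : ℕ} (T : Set (Fin n → SignType)) : Set (Fin n → SignType) :=
  {τ ∈ T | ∀ i, 0 ≤ τ i}

/-- Condition (ii): every nonzero nonnegative sign vector of `S̃⊥` dominates a nonzero
nonnegative sign vector of `S⊥`. -/
def condII {n : ℕ} (S St : Set (Fin n → ℝ)) : Prop :=
  ∀ τt ∈ plusPart (signSet (orthSet St)), τt ≠ 0 →
    ∃ τ ∈ plusPart (signSet (orthSet S)), τ ≠ 0 ∧ sleq τ τt

/-- Condition (iii): the pair `(S, S̃)` is nondegenerate. -/
def Nondeg {n : ℕ} (S St : Set (Fin n → ℝ)) : Prop :=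
  ∀ z ∈ orthSet St, (∃ i, 0 < z i) →
    (∃ lam : ℝ, 0 < lam ∧
      (fun i => if z i = lam then SignType.pos else 0) ∉ plusPart (signSet S)) ∨
    (∃ τ ∈ plusPart (signSet (orthSet S)), τ ≠ 0 ∧ ∀ i, z i = 0 → τ i = 0)

open Filter Topology

section Helpers

open Finset Matrix




private lemma exp_neg_tendsto {z : ℝ} (hz : z < 0) :
    Tendsto (fun t : ℝ => Real.exp (t * z)) atTop (𝓝 0) :=
  Real.tendsto_exp_atBot.comp ((tendsto_id (α := ℝ)).atTop_mul_const_of_neg hz)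

private lemma expsum_levels {n : ℕ} (s : Finset (Fin n)) : ∀ (a z : Fin n → ℝ) (L : ℝ),
    (∀ j ∈ s, 0 < z j) →
    Tendsto (fun t : ℝ => ∑ j ∈ s, a j * Real.exp (t * z j)) atTop (𝓝 L) →
    ∀ lam : ℝ, ∑ j ∈ s.filter (fun j => z j = lam), a j = 0 := by
  induction s using Finset.strongInduction with
  | _ s ih =>
    intro a z L hpos h lam
    rcases s.eq_empty_or_nonempty with rfl | hs
    · simp
    · have himg : (s.image z).Nonempty := hs.image z
      set M := (s.image z).max' himg with hM
      obtain ⟨j₀, hj₀s, hj₀⟩ : ∃ j₀ ∈ s, z j₀ = M := by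
        have := (s.image z).max'_mem himg
        simpa [Finset.mem_image] using this
      have hMle : ∀ j ∈ s, z j ≤ M := fun j hj =>
        Finset.le_max' _ _ (Finset.mem_image_of_mem z hj)
      have hMpos : 0 < M := hj₀ ▸ hpos j₀ hj₀s
      have hstep : ∑ j ∈ s.filter (fun j => z j = M), a j = 0 := by
        have h0 : Tendsto (fun t : ℝ => Real.exp (t * (-M)) *
            (∑ j ∈ s, a j * Real.exp (t * z j))) atTop (𝓝 (0 * L)) :=
          (exp_neg_tendsto (by linarith)).mul h
        have heq : (fun t : ℝ => Real.exp (t * (-M)) * (∑ j ∈ s, a j * Real.exp (t * z j)))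
            = fun t : ℝ => ∑ j ∈ s, a j * Real.exp (t * (z j - M)) := by
          funext t
          rw [Finset.mul_sum]
          refine Finset.sum_congr rfl fun j hj => ?_
          rw [show t * (z j - M) = t * z j + t * (-M) by ring, Real.exp_add]
          ring
        rw [heq] at h0
        have h1 : Tendsto (fun t : ℝ => ∑ j ∈ s, a j * Real.exp (t * (z j - M))) atTop
            (𝓝 (∑ j ∈ s, if z j = M then a j else 0)) := by
          refine tendsto_finset_sum _ fun j hj => ?_
          by_cases hjM : z j = M
          · simp only [hjM, if_true, sub_self, mul_zero, Real.exp_zero, mul_one]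
            exact tendsto_const_nhds
          · have hneg : z j - M < 0 := sub_neg.mpr (lt_of_le_of_ne (hMle j hj) hjM)
            simp only [hjM, if_false]
            simpa using (exp_neg_tendsto hneg).const_mul (a j)
        have hun := tendsto_nhds_unique h0 h1
        rw [Finset.sum_filter, ← hun]; ring
      set s' := s.filter (fun j => ¬ z j = M) with hs'
      have hsub : s' ⊂ s := Finset.filter_ssubset.mpr ⟨j₀, hj₀s, by simp [hj₀]⟩
      have heq2 : (fun t : ℝ => ∑ j ∈ s, a j * Real.exp (t * z j))
          = fun t : ℝ => ∑ j ∈ s', a j * Real.exp (t * z j) := by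
        funext t
        have hsplit := Finset.sum_filter_add_sum_filter_not s (fun j => z j = M)
          (fun j => a j * Real.exp (t * z j))
        have hzero : ∑ j ∈ s.filter (fun j => z j = M), a j * Real.exp (t * z j) = 0 := by
          have hconst : ∑ j ∈ s.filter (fun j => z j = M), a j * Real.exp (t * z j)
              = Real.exp (t * M) * ∑ j ∈ s.filter (fun j => z j = M), a j := by
            rw [Finset.mul_sum]
            refine Finset.sum_congr rfl fun j hj => ?_
            have hzj : z j = M := (Finset.mem_filter.mp hj).2
            rw [hzj]; ring
          rw [hconst, hstep, mul_zero]
        rw [← hsplit, hzero, zero_add]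
      rw [heq2] at h
      have hres := ih s' hsub a z L (fun j hj => hpos j (Finset.mem_filter.mp hj).1) h
      by_cases hlM : lam = M
      · subst hlM; exact hstep
      · have hfe : s.filter (fun j => z j = lam) = s'.filter (fun j => z j = lam) := by
          ext j
          simp only [hs', Finset.mem_filter]
          constructor
          · rintro ⟨hjs, hzj⟩
            exact ⟨⟨hjs, fun hM' => hlM (hzj.symm.trans hM')⟩, hzj⟩
          · rintro ⟨⟨hjs, _⟩, hzj⟩; exact ⟨hjs, hzj⟩
        rw [hfe]; exact hres lam

/-- From convergence of a full sum of exponentials, each positive level sum vanishes. -/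
private lemma expsum_level_zero {n : ℕ} (a z : Fin n → ℝ) (L : ℝ)
    (h : Tendsto (fun t : ℝ => ∑ j, a j * Real.exp (t * z j)) atTop (𝓝 L))
    {lam : ℝ} (hlam : 0 < lam) :
    ∑ j ∈ Finset.univ.filter (fun j => z j = lam), a j = 0 := by
  set s := Finset.univ.filter (fun j : Fin n => 0 < z j) with hsdef
  have hnonpos : Tendsto (fun t : ℝ =>
      ∑ j ∈ Finset.univ.filter (fun j : Fin n => ¬ 0 < z j), a j * Real.exp (t * z j)) atTop
      (𝓝 (∑ j ∈ Finset.univ.filter (fun j : Fin n => ¬ 0 < z j),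
        if z j = 0 then a j else 0)) := by
    refine tendsto_finset_sum _ fun j hj => ?_
    have hj' : ¬ 0 < z j := (Finset.mem_filter.mp hj).2
    by_cases hz0 : z j = 0
    · simp only [hz0, if_true, mul_zero, Real.exp_zero, mul_one]
      exact tendsto_const_nhds
    · have hneg : z j < 0 := lt_of_le_of_ne (not_lt.mp hj') hz0
      simp only [hz0, if_false]
      simpa using (exp_neg_tendsto hneg).const_mul (a j)
  have hpossum : Tendsto (fun t : ℝ => ∑ j ∈ s, a j * Real.exp (t * z j)) atTop
      (𝓝 (L - (∑ j ∈ Finset.univ.filter (fun j : Fin n => ¬ 0 < z j),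
        if z j = 0 then a j else 0))) := by
    have := h.sub hnonpos
    refine Tendsto.congr (fun t => ?_) this
    have hsplit := Finset.sum_filter_add_sum_filter_not Finset.univ
      (fun j : Fin n => 0 < z j) (fun j => a j * Real.exp (t * z j))
    rw [hsdef]
    linarith [hsplit]
  have hres := expsum_levels s a z _ (fun j hj => (Finset.mem_filter.mp hj).2) hpossum lam
  have hfe : Finset.univ.filter (fun j : Fin n => z j = lam)
      = s.filter (fun j => z j = lam) := by
    ext j
    simp only [hsdef, Finset.mem_filter, Finset.mem_univ, true_and]
    exact ⟨fun hzj => ⟨hzj ▸ hlam, hzj⟩, fun h' => h'.2⟩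
  rw [hfe]; exact hres

/-- Convergence of the sum of exponentials when all positive level sums vanish. -/
private lemma tendsto_expsum {n : ℕ} (a z : Fin n → ℝ)
    (hlev : ∀ lam : ℝ, 0 < lam → ∑ j ∈ Finset.univ.filter (fun j => z j = lam), a j = 0) :
    Tendsto (fun t : ℝ => ∑ j, a j * Real.exp (t * z j)) atTop
      (𝓝 (∑ j ∈ Finset.univ.filter (fun j => z j = 0), a j)) := by
  set s := Finset.univ.filter (fun j : Fin n => 0 < z j) with hsdef
  have hposzero : ∀ t : ℝ, ∑ j ∈ s, a j * Real.exp (t * z j) = 0 := by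
    intro t
    rw [← Finset.sum_fiberwise_of_maps_to (g := z) (t := s.image z)
      (fun j hj => Finset.mem_image_of_mem z hj) (fun j => a j * Real.exp (t * z j))]
    refine Finset.sum_eq_zero fun lam hlam => ?_
    obtain ⟨j₁, hj₁s, hj₁⟩ := Finset.mem_image.mp hlam
    have hlampos : 0 < lam := hj₁ ▸ (Finset.mem_filter.mp hj₁s).2
    have hconst : ∑ j ∈ s.filter (fun j => z j = lam), a j * Real.exp (t * z j)
        = Real.exp (t * lam) * ∑ j ∈ s.filter (fun j => z j = lam), a j := by
      rw [Finset.mul_sum]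
      refine Finset.sum_congr rfl fun j hj => ?_
      have hzj : z j = lam := (Finset.mem_filter.mp hj).2
      rw [hzj]; ring
    have hfe : s.filter (fun j => z j = lam)
        = Finset.univ.filter (fun j : Fin n => z j = lam) := by
      ext j
      simp only [hsdef, Finset.mem_filter, Finset.mem_univ, true_and]
      exact ⟨fun h' => h'.2, fun hzj => ⟨hzj ▸ hlampos, hzj⟩⟩
    rw [hconst, hfe, hlev lam hlampos, mul_zero]
  have hnonpos : Tendsto (fun t : ℝ =>
      ∑ j ∈ Finset.univ.filter (fun j : Fin n => ¬ 0 < z j), a j * Real.exp (t * z j)) atTop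
      (𝓝 (∑ j ∈ Finset.univ.filter (fun j : Fin n => ¬ 0 < z j),
        if z j = 0 then a j else 0)) := by
    refine tendsto_finset_sum _ fun j hj => ?_
    have hj' : ¬ 0 < z j := (Finset.mem_filter.mp hj).2
    by_cases hz0 : z j = 0
    · simp only [hz0, if_true, mul_zero, Real.exp_zero, mul_one]
      exact tendsto_const_nhds
    · have hneg : z j < 0 := lt_of_le_of_ne (not_lt.mp hj') hz0
      simp only [hz0, if_false]
      simpa using (exp_neg_tendsto hneg).const_mul (a j)
  have heqlim : ∑ j ∈ Finset.univ.filter (fun j : Fin n => ¬ 0 < z j),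
      (if z j = 0 then a j else 0) = ∑ j ∈ Finset.univ.filter (fun j : Fin n => z j = 0), a j := by
    rw [← Finset.sum_filter, Finset.filter_filter]
    apply Finset.sum_congr _ fun _ _ => rfl
    ext j
    simp only [Finset.mem_filter, Finset.mem_univ, true_and]
    exact ⟨fun h' => h'.2, fun hzj => ⟨by simp [hzj], hzj⟩⟩
  have : Tendsto (fun t : ℝ => ∑ j, a j * Real.exp (t * z j)) atTop
      (𝓝 (∑ j ∈ Finset.univ.filter (fun j : Fin n => ¬ 0 < z j),
        if z j = 0 then a j else 0)) := by
    refine Tendsto.congr (fun t => ?_) hnonpos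
    have hsplit := Finset.sum_filter_add_sum_filter_not Finset.univ
      (fun j : Fin n => 0 < z j) (fun j => a j * Real.exp (t * z j))
    rw [← hsplit, ← hsdef, hposzero t, zero_add]
  rw [heqlim] at this
  exact this

private def dotd {d : ℕ} (w y : Fin d → ℝ) : ℝ := ∑ k, w k * y k

private lemma coneOf_convex {d n : ℕ} (W : Matrix (Fin d) (Fin n) ℝ) :
    Convex ℝ (coneOf W) := by
  rintro y1 ⟨u1, hu1, rfl⟩ y2 ⟨u2, hu2, rfl⟩ a b ha hb hab
  refine ⟨fun j => a * u1 j + b * u2 j,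
    fun j => add_nonneg (mul_nonneg ha (hu1 j)) (mul_nonneg hb (hu2 j)), ?_⟩
  funext i
  simp only [Pi.add_apply, Pi.smul_apply, smul_eq_mul, Finset.mul_sum]
  rw [← Finset.sum_add_distrib]
  apply Finset.sum_congr rfl
  intro j _; ring

private lemma zero_mem_coneOf {d n : ℕ} (W : Matrix (Fin d) (Fin n) ℝ) :
    (0 : Fin d → ℝ) ∈ coneOf W :=
  ⟨0, fun j => le_refl 0, by funext i; simp⟩

private lemma smul_mem_coneOf {d n : ℕ} (W : Matrix (Fin d) (Fin n) ℝ)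
    {y : Fin d → ℝ} {c : ℝ} (hc : 0 ≤ c) (hy : y ∈ coneOf W) : c • y ∈ coneOf W := by
  obtain ⟨u, hu, rfl⟩ := hy
  refine ⟨fun j => c * u j, fun j => mul_nonneg hc (hu j), ?_⟩
  funext i
  simp only [Pi.smul_apply, smul_eq_mul, Finset.mul_sum]
  apply Finset.sum_congr rfl
  intro j _; ring

private lemma mulVec_transpose_injective {m n : ℕ} (A : Matrix (Fin m) (Fin n) ℝ)
    (hA : A.rank = m) {w : Fin m → ℝ} (hw : Aᵀ.mulVec w = 0) : w = 0 := by
  have h1 : Aᵀ.rank = m := by rw [Matrix.rank_transpose, hA]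
  rw [Matrix.rank] at h1
  have h2 := LinearMap.finrank_range_add_finrank_ker (Aᵀ.mulVecLin)
  rw [h1, Module.finrank_fin_fun] at h2
  have h3 : Module.finrank ℝ (LinearMap.ker Aᵀ.mulVecLin) = 0 := by omega
  have h4 : LinearMap.ker Aᵀ.mulVecLin = ⊥ := Submodule.finrank_eq_zero.mp h3
  have h5 : w ∈ LinearMap.ker Aᵀ.mulVecLin := by
    rw [LinearMap.mem_ker, Matrix.mulVecLin_apply]; exact hw
  rw [h4, Submodule.mem_bot] at h5
  exact h5

private lemma mulVec_surjective {m n : ℕ} (A : Matrix (Fin m) (Fin n) ℝ)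
    (hA : A.rank = m) : Function.Surjective A.mulVec := by
  rw [Matrix.rank] at hA
  have h1 : LinearMap.range A.mulVecLin = ⊤ :=
    Submodule.eq_top_of_finrank_eq (by rw [hA, Module.finrank_fin_fun])
  intro y
  have : y ∈ LinearMap.range A.mulVecLin := by rw [h1]; trivial
  obtain ⟨u, hu⟩ := this
  exact ⟨u, hu⟩

private lemma orth_kerSet_sub_range {m n : ℕ} (A : Matrix (Fin m) (Fin n) ℝ)
    {v : Fin n → ℝ} (hv : v ∈ orthSet (kerSet A)) : ∃ w : Fin m → ℝ, v = Aᵀ.mulVec w := by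
  classical
  let L : Fin m → (Fin n → ℝ) →ₗ[ℝ] ℝ := fun k => LinearMap.proj k ∘ₗ A.mulVecLin
  let K : (Fin n → ℝ) →ₗ[ℝ] ℝ :=
    { toFun := fun u => ∑ i, u i * v i
      map_add' := fun u u' => by
        simp [Pi.add_apply, add_mul, Finset.sum_add_distrib]
      map_smul' := fun r u => by
        simp [Pi.smul_apply, smul_eq_mul, Finset.mul_sum, mul_assoc] }
  have hker : ⨅ k, LinearMap.ker (L k) ≤ LinearMap.ker K := by
    intro u hu
    simp only [Submodule.mem_iInf] at hu
    have hu0 : A.mulVec u = 0 := by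
      funext k
      have hk := hu k
      simpa [L, LinearMap.mem_ker, Matrix.mulVecLin_apply] using hk
    rw [LinearMap.mem_ker]
    exact hv u hu0
  have hspan := mem_span_of_iInf_ker_le_ker (L := L) (K := K) hker
  obtain ⟨c, hc⟩ := (Submodule.mem_span_range_iff_exists_fun ℝ).1 hspan
  refine ⟨c, ?_⟩
  funext i
  have happ := congrArg (fun f : (Fin n → ℝ) →ₗ[ℝ] ℝ => f (Pi.single i 1)) hc
  simp only [LinearMap.coe_sum, Finset.sum_apply, LinearMap.smul_apply,
    smul_eq_mul] at happ
  have hL : ∀ k, L k (Pi.single i 1) = A k i := by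
    intro k
    simp [L, Matrix.mulVecLin_apply, Matrix.mulVec_single]
  have hK : K (Pi.single i 1) = v i := by
    simp only [K, LinearMap.coe_mk, AddHom.coe_mk]
    simp [Pi.single_apply, ite_mul, Finset.sum_ite_eq]
  rw [hK] at happ
  have : ∑ k, c k * A k i = v i := by
    rw [← happ]
    apply Finset.sum_congr rfl
    intro k _
    rw [hL k]
  rw [← this]
  simp [Matrix.mulVec, dotProduct, Matrix.transpose_apply, mul_comm]

private lemma interior_coneOf_nonempty {d n : ℕ} (W : Matrix (Fin d) (Fin n) ℝ)
    (hW : W.rank = d) : (interior (coneOf W)).Nonempty := by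
  classical
  let L : (Fin n → ℝ) →L[ℝ] (Fin d → ℝ) := LinearMap.toContinuousLinearMap W.mulVecLin
  have hLapp : ∀ u, L u = W.mulVec u := fun u => rfl
  have hsurj : Function.Surjective L := by
    intro y; obtain ⟨u, hu⟩ := mulVec_surjective W hW y; exact ⟨u, by rw [hLapp]; exact hu⟩
  have hopenmap : IsOpenMap L := ContinuousLinearMap.isOpenMap L hsurj
  have hUopen : IsOpen {u : Fin n → ℝ | ∀ j, 0 < u j} := by
    have : {u : Fin n → ℝ | ∀ j, 0 < u j} = ⋂ j, {u | 0 < u j} := by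
      ext u; simp [Set.mem_iInter]
    rw [this]
    exact isOpen_iInter_of_finite fun j => isOpen_lt continuous_const (continuous_apply j)
  have himg : IsOpen (L '' {u : Fin n → ℝ | ∀ j, 0 < u j}) := hopenmap _ hUopen
  have hsub : L '' {u : Fin n → ℝ | ∀ j, 0 < u j} ⊆ coneOf W := by
    rintro q ⟨u, hu, rfl⟩
    refine ⟨u, fun j => le_of_lt (hu j), ?_⟩
    funext i
    rw [hLapp]
    simp [Matrix.mulVec, dotProduct, mul_comm]
  have hne : (L '' {u : Fin n → ℝ | ∀ j, 0 < u j}).Nonempty :=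
    ⟨L 1, Set.mem_image_of_mem L fun j => one_pos⟩
  exact hne.mono (interior_maximal hsub himg)

private lemma exists_support_of_frontier {d n : ℕ} (W : Matrix (Fin d) (Fin n) ℝ)
    (hW : W.rank = d) {y : Fin d → ℝ} (hyC : y ∈ coneOf W)
    (hfr : y ∈ frontier (coneOf W)) :
    ∃ w : Fin d → ℝ, w ≠ 0 ∧ (∀ q ∈ coneOf W, dotd w q ≤ 0) ∧ dotd w y = 0 := by
  classical
  obtain ⟨a₀, ha₀⟩ := interior_coneOf_nonempty W hW
  have hconv := coneOf_convex W
  have hyni : y ∉ interior (coneOf W) := hfr.2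
  obtain ⟨f, hf⟩ := geometric_hahn_banach_open_point hconv.interior isOpen_interior hyni
  have hrep : ∀ q : Fin d → ℝ, f q = ∑ k, q k * f (Pi.single k 1) := by
    intro q
    have hq : q = ∑ k, q k • (Pi.single k (1:ℝ) : Fin d → ℝ) := by
      funext i
      simp [Finset.sum_apply, Pi.single_apply, mul_ite, Finset.sum_ite_eq]
    conv_lhs => rw [hq]
    rw [map_sum]
    apply Finset.sum_congr rfl
    intro k _
    rw [_root_.map_smul]; simp [smul_eq_mul]
  have hle : ∀ q ∈ coneOf W, f q ≤ f y := by
    intro q hq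
    have hev : ∀ᶠ θ : ℝ in 𝓝[>] (0:ℝ), θ * f a₀ + (1 - θ) * f q ≤ f y := by
      filter_upwards [Ioc_mem_nhdsGT_of_mem (Set.left_mem_Ico.mpr one_pos)] with θ hθ
      have hmem := hconv.combo_interior_closure_mem_interior (a := θ) (b := 1 - θ) ha₀ (subset_closure hq)
        hθ.1 (by linarith [hθ.2]) (by ring)
      have hlt := hf _ hmem
      calc θ * f a₀ + (1 - θ) * f q = f (θ • a₀ + (1 - θ) • q) := by
            rw [map_add, _root_.map_smul, _root_.map_smul]; simp [smul_eq_mul]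
        _ ≤ f y := le_of_lt hlt
    have hten : Tendsto (fun θ : ℝ => θ * f a₀ + (1 - θ) * f q) (𝓝[>] (0:ℝ)) (𝓝 (f q)) := by
      have hc : Tendsto (fun θ : ℝ => θ * f a₀ + (1 - θ) * f q) (𝓝 (0:ℝ))
          (𝓝 (0 * f a₀ + (1 - 0) * f q)) := by
        exact ((tendsto_id.mul tendsto_const_nhds).add
          ((tendsto_const_nhds.sub tendsto_id).mul tendsto_const_nhds))
      have h2 := hc.mono_left (nhdsWithin_le_nhds (s := Set.Ioi (0:ℝ)))
      simpa using h2
    exact le_of_tendsto hten hev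
  have hfy0 : f y = 0 := by
    have h2 : f ((2:ℝ) • y) ≤ f y := hle _ (smul_mem_coneOf W (by norm_num) hyC)
    rw [_root_.map_smul, smul_eq_mul] at h2
    have h0 : (0:ℝ) ≤ f y := by
      have := hle 0 (zero_mem_coneOf W)
      rwa [map_zero] at this
    linarith
  set w : Fin d → ℝ := fun k => f (Pi.single k 1) with hwdef
  have hdot : ∀ q : Fin d → ℝ, dotd w q = f q := by
    intro q
    rw [hrep q]
    simp only [dotd, hwdef]
    apply Finset.sum_congr rfl
    intro k _; ring
  refine ⟨w, ?_, ?_, ?_⟩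
  · intro hw0
    have hfa : f a₀ = 0 := by rw [← hdot, hw0]; simp [dotd]
    have hlt := hf a₀ ha₀
    rw [hfy0, hfa] at hlt
    exact lt_irrefl 0 hlt
  · intro q hq
    rw [hdot]
    rw [← hfy0]
    exact hle q hq
  · rw [hdot]; exact hfy0

private lemma notMem_interior_of_support {d n : ℕ} (W : Matrix (Fin d) (Fin n) ℝ)
    {w y : Fin d → ℝ} (hw : w ≠ 0) (hsupp : ∀ q ∈ coneOf W, 0 ≤ dotd w q)
    (hy : dotd w y = 0) : y ∉ interior (coneOf W) := by
  intro hin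
  obtain ⟨δ, hδ, hball⟩ := Metric.isOpen_iff.mp isOpen_interior y hin
  have hwn : 0 < ‖w‖ := norm_pos_iff.mpr hw
  set ε : ℝ := δ / (2 * ‖w‖) with hε
  have hεpos : 0 < ε := by positivity
  have hmem : y - ε • w ∈ Metric.ball y δ := by
    rw [Metric.mem_ball, dist_eq_norm]
    have heq : y - ε • w - y = -(ε • w) := by abel
    rw [heq, norm_neg, norm_smul, Real.norm_eq_abs, abs_of_pos hεpos]
    rw [hε]
    rw [div_mul_eq_mul_div, mul_comm]
    rw [mul_div_assoc]
    calc ‖w‖ * (δ / (2 * ‖w‖)) = δ / 2 := by field_simp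
      _ < δ := by linarith
  have hq := hsupp _ (interior_subset (hball hmem))
  have hsq : 0 < ∑ k, w k * w k := by
    obtain ⟨k₀, hk₀⟩ := Function.ne_iff.mp hw
    exact Finset.sum_pos' (fun k _ => mul_self_nonneg _)
      ⟨k₀, Finset.mem_univ _, mul_self_pos.mpr hk₀⟩
  have hdq : dotd w (y - ε • w) = dotd w y - ε * ∑ k, w k * w k := by
    simp only [dotd, Pi.sub_apply, Pi.smul_apply, smul_eq_mul, mul_sub,
      Finset.sum_sub_distrib, Finset.mul_sum]
    congr 1
    apply Finset.sum_congr rfl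
    intro k _; ring
  rw [hdq, hy, zero_sub] at hq
  nlinarith

private lemma col_mem_coneOf {d n : ℕ} (W : Matrix (Fin d) (Fin n) ℝ) (j0 : Fin n) :
    (fun i => W i j0) ∈ coneOf W := by
  refine ⟨Pi.single j0 1, fun j => ?_, ?_⟩
  · by_cases h : j = j0 <;> simp [Pi.single_apply, h]
  · funext i
    simp [Pi.single_apply, ite_mul, Finset.sum_ite_eq]

private lemma y0_mem_coneOf {d n : ℕ} (W : Matrix (Fin d) (Fin n) ℝ) (z c : Fin n → ℝ)
    (hc : ∀ j, 0 ≤ c j) :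
    (fun i => ∑ j ∈ Finset.univ.filter (fun j => z j = 0), c j * W i j) ∈ coneOf W := by
  refine ⟨fun j => if z j = 0 then c j else 0,
    fun j => by by_cases h : z j = 0 <;> simp [h, hc j], ?_⟩
  funext i
  rw [Finset.sum_filter]
  apply Finset.sum_congr rfl
  intro j _
  rw [ite_mul, zero_mul]

private lemma dot_cone_swap {d n : ℕ} (W : Matrix (Fin d) (Fin n) ℝ) (w : Fin d → ℝ)
    (s : Finset (Fin n)) (g : Fin n → ℝ) :
    ∑ k, w k * (∑ j ∈ s, g j * W k j) = ∑ j ∈ s, g j * (∑ k, w k * W k j) := by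
  calc ∑ k, w k * (∑ j ∈ s, g j * W k j)
      = ∑ k, ∑ j ∈ s, w k * (g j * W k j) := by
        apply Finset.sum_congr rfl; intro k _; rw [Finset.mul_sum]
    _ = ∑ j ∈ s, ∑ k, w k * (g j * W k j) := Finset.sum_comm
    _ = ∑ j ∈ s, g j * (∑ k, w k * W k j) := by
        apply Finset.sum_congr rfl; intro j _; rw [Finset.mul_sum]
        apply Finset.sum_congr rfl; intro k _; ring

private lemma dot_mulVec_swap {m n : ℕ} (A : Matrix (Fin m) (Fin n) ℝ) (w : Fin m → ℝ)
    (u : Fin n → ℝ) : ∑ j, u j * (∑ k, w k * A k j) = ∑ k, w k * (A.mulVec u) k := by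
  have h := dot_cone_swap A w Finset.univ u
  rw [← h]
  apply Finset.sum_congr rfl
  intro k _
  simp only [Matrix.mulVec, dotProduct]
  rw [Finset.mul_sum, Finset.mul_sum]
  apply Finset.sum_congr rfl
  intro j _; ring

private lemma dotd_y0 {d n : ℕ} (W : Matrix (Fin d) (Fin n) ℝ) (w : Fin d → ℝ)
    (z c : Fin n → ℝ) :
    dotd w (fun i => ∑ j ∈ Finset.univ.filter (fun j => z j = 0), c j * W i j)
      = ∑ j ∈ Finset.univ.filter (fun j => z j = 0), c j * (∑ k, w k * W k j) := by
  simp only [dotd]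
  exact dot_cone_swap W w _ c

private lemma Fmap_ray {d n : ℕ} (W Wt : Matrix (Fin d) (Fin n) ℝ) (c : Fin n → ℝ)
    (x : Fin d → ℝ) (i : Fin d) (t : ℝ) :
    Fmap W Wt c (t • x) i = ∑ j, (c j * W i j) * Real.exp (t * (∑ k, Wt k j * x k)) := by
  unfold Fmap
  apply Finset.sum_congr rfl
  intro j _
  have hexp : ∑ k, Wt k j * (t • x) k = t * ∑ k, Wt k j * x k := by
    rw [Finset.mul_sum]
    apply Finset.sum_congr rfl
    intro k _
    simp only [Pi.smul_apply, smul_eq_mul]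
    ring
  rw [hexp]
  ring

private lemma tendsto_Fmap_ray {d n : ℕ} (W Wt : Matrix (Fin d) (Fin n) ℝ)
    (c : Fin n → ℝ) (x : Fin d → ℝ)
    (hlev : ∀ lam : ℝ, 0 < lam → ∀ i,
      ∑ j ∈ Finset.univ.filter (fun j => (∑ k, Wt k j * x k) = lam), c j * W i j = 0) :
    Tendsto (fun t : ℝ => Fmap W Wt c (t • x)) atTop
      (𝓝 (fun i => ∑ j ∈ Finset.univ.filter (fun j => (∑ k, Wt k j * x k) = 0),
        c j * W i j)) := by
  rw [tendsto_pi_nhds]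
  intro i
  have h2 := tendsto_expsum (fun j => c j * W i j) (fun j => ∑ k, Wt k j * x k)
    (fun lam hlam => hlev lam hlam i)
  exact Tendsto.congr (fun t => (Fmap_ray W Wt c x i t).symm) h2

private lemma z_mem_orth {d n : ℕ} (Wt : Matrix (Fin d) (Fin n) ℝ) (x : Fin d → ℝ) :
    (fun j => ∑ k, Wt k j * x k) ∈ orthSet (kerSet Wt) := by
  intro u hu
  have hswap : ∑ j, u j * (∑ k, x k * Wt k j) = ∑ k, x k * (Wt.mulVec u) k :=
    dot_mulVec_swap Wt x u
  have heq : ∑ j, u j * (∑ k, Wt k j * x k) = ∑ j, u j * (∑ k, x k * Wt k j) := by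
    apply Finset.sum_congr rfl; intro j _; congr 1
    apply Finset.sum_congr rfl; intro k _; ring
  rw [heq, hswap]
  have hu0 : Wt.mulVec u = 0 := hu
  rw [hu0]
  simp

private lemma ray_to_v {d n : ℕ} (W Wt : Matrix (Fin d) (Fin n) ℝ) (hW : W.rank = d)
    (hray : ∀ x : Fin d → ℝ, x ≠ 0 → ∀ c : Fin n → ℝ, (∀ j, 0 < c j) → ∀ y : Fin d → ℝ,
      Tendsto (fun t : ℝ => Fmap W Wt c (t • x)) atTop (𝓝 y) → y ∈ frontier (coneOf W))
    {x : Fin d → ℝ} (hx : x ≠ 0) {c : Fin n → ℝ} (hc : ∀ j, 0 < c j)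
    (hlev : ∀ lam : ℝ, 0 < lam → ∀ i,
      ∑ j ∈ Finset.univ.filter (fun j => (∑ k, Wt k j * x k) = lam), c j * W i j = 0) :
    ∃ v : Fin n → ℝ, v ∈ orthSet (kerSet W) ∧ (∀ j, 0 ≤ v j) ∧ v ≠ 0 ∧
      (∀ j, (∑ k, Wt k j * x k) = 0 → v j = 0) := by
  set z : Fin n → ℝ := fun j => ∑ k, Wt k j * x k with hzdef
  set y₀ : Fin d → ℝ := fun i => ∑ j ∈ Finset.univ.filter (fun j => z j = 0), c j * W i j
    with hy₀def
  have hten := tendsto_Fmap_ray W Wt c x hlev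
  have hy₀C : y₀ ∈ coneOf W := y0_mem_coneOf W z c (fun j => (hc j).le)
  have hfr : y₀ ∈ frontier (coneOf W) := hray x hx c hc y₀ hten
  obtain ⟨w, hwne, hwsupp, hwy⟩ := exists_support_of_frontier W hW hy₀C hfr
  have hcolle : ∀ j, (∑ k, w k * W k j) ≤ 0 := by
    intro j
    have hcol := hwsupp _ (col_mem_coneOf W j)
    simpa [dotd] using hcol
  refine ⟨fun j => -(∑ k, w k * W k j), ?_, ?_, ?_, ?_⟩
  · intro u hu
    have hswap := dot_mulVec_swap W w u
    have hu0 : W.mulVec u = 0 := hu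
    have : ∑ j, u j * -(∑ k, w k * W k j) = -(∑ j, u j * (∑ k, w k * W k j)) := by
      rw [← Finset.sum_neg_distrib]
      apply Finset.sum_congr rfl
      intro j _; ring
    rw [this, hswap, hu0]
    simp
  · intro j
    simp only [neg_nonneg]
    exact hcolle j
  · intro hv0
    apply hwne
    apply mulVec_transpose_injective W hW
    funext j
    have hj := congrFun hv0 j
    simp only [Pi.zero_apply, neg_eq_zero] at hj
    show ∑ k, Wᵀ j k * w k = 0
    rw [← hj]
    apply Finset.sum_congr rfl
    intro k _
    rw [Matrix.transpose_apply]
    ring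
  · intro j hzj
    have hdz := dotd_y0 W w z c
    rw [hwy] at hdz
    have hterm : ∀ j' ∈ Finset.univ.filter (fun j' => z j' = 0),
        0 ≤ -(c j' * (∑ k, w k * W k j')) := by
      intro j' _
      have := mul_nonpos_of_nonneg_of_nonpos (hc j').le (hcolle j')
      linarith
    have hsum0 : ∑ j' ∈ Finset.univ.filter (fun j' => z j' = 0),
        -(c j' * (∑ k, w k * W k j')) = 0 := by
      rw [Finset.sum_neg_distrib, ← hdz]
      ring
    have hall := (Finset.sum_eq_zero_iff_of_nonneg hterm).mp hsum0
    have hj := hall j (Finset.mem_filter.mpr ⟨Finset.mem_univ j, hzj⟩)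
    have hcj := hc j
    have hz0 : (∑ k, w k * W k j) = 0 := by
      by_contra hne
      have hlt : (∑ k, w k * W k j) < 0 := lt_of_le_of_ne (hcolle j) hne
      nlinarith
    show -(∑ k, w k * W k j) = 0
    rw [hz0]
    ring

private lemma v_to_frontier {d n : ℕ} (W : Matrix (Fin d) (Fin n) ℝ) (z : Fin n → ℝ)
    {c : Fin n → ℝ} (hc : ∀ j, 0 < c j) {v : Fin n → ℝ}
    (hvorth : v ∈ orthSet (kerSet W)) (hvnn : ∀ j, 0 ≤ v j) (hvne : v ≠ 0)
    (hvz : ∀ j, z j = 0 → v j = 0) :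
    (fun i => ∑ j ∈ Finset.univ.filter (fun j => z j = 0), c j * W i j)
      ∈ frontier (coneOf W) := by
  obtain ⟨w, hw⟩ := orth_kerSet_sub_range W hvorth
  have hvj : ∀ j, v j = ∑ k, w k * W k j := by
    intro j
    rw [hw]
    show ∑ k, Wᵀ j k * w k = ∑ k, w k * W k j
    apply Finset.sum_congr rfl
    intro k _
    rw [Matrix.transpose_apply]; ring
  have hwne : w ≠ 0 := by
    intro h0
    apply hvne
    funext j
    rw [hvj j, h0]
    simp
  have hsupp : ∀ q ∈ coneOf W, 0 ≤ dotd w q := by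
    rintro q ⟨u, hu, rfl⟩
    have : dotd w (fun i => ∑ j, u j * W i j) = ∑ j, u j * (∑ k, w k * W k j) := by
      simp only [dotd]
      exact dot_cone_swap W w Finset.univ u
    rw [this]
    apply Finset.sum_nonneg
    intro j _
    rw [← hvj j]
    exact mul_nonneg (hu j) (hvnn j)
  have hdot : dotd w (fun i => ∑ j ∈ Finset.univ.filter (fun j => z j = 0),
      c j * W i j) = 0 := by
    rw [dotd_y0 W w z c]
    apply Finset.sum_eq_zero
    intro j hj
    have hzj : z j = 0 := (Finset.mem_filter.mp hj).2
    rw [← hvj j, hvz j hzj]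
    ring
  exact ⟨subset_closure (y0_mem_coneOf W z c fun j => (hc j).le),
    notMem_interior_of_support W hwne hsupp hdot⟩

end Helpers

/-- the ray condition (for all rays and all `c > 0`) holds iff
conditions (ii) and (iii) hold for the pair `(S, S̃) = (ker W, ker W̃)`. -/
theorem stmt8 {d n : ℕ} (hd : 1 ≤ d) (hdn : d ≤ n)
    (W Wt : Matrix (Fin d) (Fin n) ℝ) (hW : W.rank = d) (hWt : Wt.rank = d) :
    (∀ x : Fin d → ℝ, x ≠ 0 → ∀ c : Fin n → ℝ, (∀ j, 0 < c j) → ∀ y : Fin d → ℝ,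
      Tendsto (fun t : ℝ => Fmap W Wt c (t • x)) atTop (𝓝 y) → y ∈ frontier (coneOf W)) ↔
    (condII (kerSet W) (kerSet Wt) ∧ Nondeg (kerSet W) (kerSet Wt)) := by
  constructor
  · -- ray condition implies (ii) and (iii)
    intro hray
    constructor
    · -- condition (ii)
      intro τt hmem hne
      obtain ⟨⟨zt, hztorth, hzeq⟩, hτnn⟩ := hmem
      have hztnn : ∀ j, 0 ≤ zt j := by
        intro j
        have := hτnn j
        rw [← hzeq] at this
        exact sign_nonneg_iff.mp this
      have hztne : zt ≠ 0 := by
        intro h0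
        apply hne
        rw [← hzeq, h0]
        funext i
        simp [signVec]
      obtain ⟨xt, hxt⟩ := orth_kerSet_sub_range Wt hztorth
      set x : Fin d → ℝ := -xt with hxdef
      have hzx : ∀ j, (∑ k, Wt k j * x k) = -(zt j) := by
        intro j
        rw [hxt]
        show ∑ k, Wt k j * (-xt) k = -(∑ k, Wt.transpose j k * xt k)
        rw [← Finset.sum_neg_distrib]
        apply Finset.sum_congr rfl
        intro k _
        rw [Matrix.transpose_apply]
        simp only [Pi.neg_apply]
        ring
      have hxne : x ≠ 0 := by
        intro h0
        apply hztne
        have hxt0 : xt = 0 := by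
          have := congrArg Neg.neg h0
          simpa [hxdef] using this
        rw [hxt, hxt0]
        simp
      have hlev : ∀ lam : ℝ, 0 < lam → ∀ i,
          ∑ j ∈ Finset.univ.filter (fun j => (∑ k, Wt k j * x k) = lam),
            (fun _ : Fin n => (1:ℝ)) j * W i j = 0 := by
        intro lam hlam i
        have hempty : Finset.univ.filter (fun j => (∑ k, Wt k j * x k) = lam) = ∅ := by
          rw [Finset.filter_eq_empty_iff]
          intro j _
          rw [hzx j]
          intro hcontra
          have := hztnn j
          linarith
        rw [hempty, Finset.sum_empty]
      obtain ⟨v, hvorth, hvnn, hvne, hvz⟩ :=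
        ray_to_v W Wt hW hray hxne (fun j => one_pos) hlev
      refine ⟨signVec v, ⟨⟨v, hvorth, rfl⟩, fun i => sign_nonneg_iff.mpr (hvnn i)⟩, ?_, ?_⟩
      · intro h0
        apply hvne
        funext j
        have := congrFun h0 j
        simpa [signVec, sign_eq_zero_iff] using this
      · intro i
        by_cases hvi : v i = 0
        · left
          simp [signVec, hvi]
        · right
          have hvpos : 0 < v i := lt_of_le_of_ne (hvnn i) (Ne.symm hvi)
          have hzti : 0 < zt i := by
            rcases lt_or_eq_of_le (hztnn i) with h | h
            · exact h
            · exfalso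
              apply hvi
              apply hvz
              rw [hzx i, ← h]
              ring
          rw [← hzeq]
          simp only [signVec]
          rw [sign_pos hvpos, sign_pos hzti]
    · -- condition (iii)
      intro z hzorth hzpos
      by_cases hall : ∀ lam : ℝ, 0 < lam →
          ((fun i => if z i = lam then SignType.pos else 0) ∈ plusPart (signSet (kerSet W)))
      · right
        have hU : ∀ lam : ℝ, 0 < lam → ∃ u, u ∈ kerSet W ∧
            signVec u = (fun i => if z i = lam then SignType.pos else 0) := by
          intro lam hlam
          obtain ⟨u, hu, hueq⟩ := (hall lam hlam).1
          exact ⟨u, hu, hueq⟩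
        choose U hUker hUsign using hU
        have hUpos : ∀ (lam : ℝ) (h : 0 < lam) (j : Fin n), z j = lam → 0 < U lam h j := by
          intro lam h j hj
          have := congrFun (hUsign lam h) j
          simp only [signVec, hj, if_pos rfl] at this
          exact sign_eq_one_iff.mp (by rw [this]; rfl)
        have hUzero : ∀ (lam : ℝ) (h : 0 < lam) (j : Fin n), z j ≠ lam → U lam h j = 0 := by
          intro lam h j hj
          have := congrFun (hUsign lam h) j
          simp only [signVec, hj, if_neg hj] at this
          exact sign_eq_zero_iff.mp this
        set c : Fin n → ℝ := fun j => if h : 0 < z j then U (z j) h j else 1 with hcdef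
        have hcpos : ∀ j, 0 < c j := by
          intro j
          show 0 < if h : 0 < z j then U (z j) h j else 1
          by_cases h : 0 < z j
          · rw [dif_pos h]
            exact hUpos (z j) h j rfl
          · rw [dif_neg h]
            exact one_pos
        obtain ⟨xt, hxt⟩ := orth_kerSet_sub_range Wt hzorth
        have hzx : ∀ j, (∑ k, Wt k j * xt k) = z j := by
          intro j
          rw [hxt]
          show ∑ k, Wt k j * xt k = ∑ k, Wt.transpose j k * xt k
          apply Finset.sum_congr rfl
          intro k _
          rw [Matrix.transpose_apply]
        have hzne : z ≠ 0 := by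
          obtain ⟨i0, hi0⟩ := hzpos
          intro h0
          rw [congrFun h0 i0] at hi0
          exact lt_irrefl 0 hi0
        have hxne : xt ≠ 0 := by
          intro h0
          apply hzne
          funext j
          rw [← hzx j, h0]
          simp
        have hlev : ∀ lam : ℝ, 0 < lam → ∀ i,
            ∑ j ∈ Finset.univ.filter (fun j => (∑ k, Wt k j * xt k) = lam),
              c j * W i j = 0 := by
          intro lam hlam i
          have hfe : Finset.univ.filter (fun j => (∑ k, Wt k j * xt k) = lam)
              = Finset.univ.filter (fun j => z j = lam) := by
            ext j
            simp only [Finset.mem_filter, Finset.mem_univ, true_and, hzx j]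
          rw [hfe]
          have hcc : ∀ j ∈ Finset.univ.filter (fun j => z j = lam),
              c j * W i j = U lam hlam j * W i j := by
            intro j hj
            have hzj : z j = lam := (Finset.mem_filter.mp hj).2
            subst hzj
            congr 1
            show (if h : 0 < z j then U (z j) h j else 1) = U (z j) hlam j
            rw [dif_pos hlam]
          rw [Finset.sum_congr rfl hcc]
          have hext : ∑ j ∈ Finset.univ.filter (fun j => z j = lam), U lam hlam j * W i j
              = ∑ j, U lam hlam j * W i j := by
            apply Finset.sum_subset (Finset.subset_univ _)
            intro j _ hj
            have hzj : z j ≠ lam := by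
              intro hcontra
              exact hj (by simp [hcontra])
            rw [hUzero lam hlam j hzj, zero_mul]
          rw [hext]
          have hker := hUker lam hlam
          have hker0 : W.mulVec (U lam hlam) = 0 := hker
          have := congrFun hker0 i
          simp only [Matrix.mulVec, dotProduct, Pi.zero_apply] at this
          rw [← this]
          apply Finset.sum_congr rfl
          intro j _; ring
        obtain ⟨v, hvorth, hvnn, hvne, hvz⟩ := ray_to_v W Wt hW hray hxne hcpos hlev
        refine ⟨signVec v, ⟨⟨v, hvorth, rfl⟩, fun i => sign_nonneg_iff.mpr (hvnn i)⟩, ?_, ?_⟩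
        · intro h0
          apply hvne
          funext j
          have := congrFun h0 j
          simpa [signVec, sign_eq_zero_iff] using this
        · intro i hzi
          have hvi : v i = 0 := hvz i (by rw [hzx i, hzi])
          simp [signVec, hvi]
      · left
        push_neg at hall
        obtain ⟨lam, hlam, hnot⟩ := hall
        exact ⟨lam, hlam, hnot⟩
  · -- conditions imply ray condition
    rintro ⟨hii, hiii⟩ x hx c hc y hy
    set z : Fin n → ℝ := fun j => ∑ k, Wt k j * x k with hzdef
    have hzorth : z ∈ orthSet (kerSet Wt) := z_mem_orth Wt x
    have hzne : z ≠ 0 := by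
      intro h0
      apply hx
      apply mulVec_transpose_injective Wt hWt
      funext j
      have := congrFun h0 j
      simp only [hzdef, Pi.zero_apply] at this
      show ∑ k, Wt.transpose j k * x k = 0
      rw [← this]
      apply Finset.sum_congr rfl
      intro k _
      rw [Matrix.transpose_apply]
    have hyi : ∀ i, Tendsto (fun t : ℝ => ∑ j, (c j * W i j) * Real.exp (t * z j))
        atTop (𝓝 (y i)) := by
      intro i
      have h1 := tendsto_pi_nhds.mp hy i
      exact Tendsto.congr (fun t => Fmap_ray W Wt c x i t) h1
    have hlev : ∀ lam : ℝ, 0 < lam → ∀ i,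
        ∑ j ∈ Finset.univ.filter (fun j => z j = lam), c j * W i j = 0 :=
      fun lam hlam i =>
        expsum_level_zero (fun j => c j * W i j) z (y i) (hyi i) hlam
    have hyeq : y = fun i => ∑ j ∈ Finset.univ.filter (fun j => z j = 0), c j * W i j := by
      funext i
      exact tendsto_nhds_unique (hyi i)
        (tendsto_expsum (fun j => c j * W i j) z (fun lam hlam => hlev lam hlam i))
    have hv : ∃ v : Fin n → ℝ, v ∈ orthSet (kerSet W) ∧ (∀ j, 0 ≤ v j) ∧ v ≠ 0 ∧
        (∀ j, z j = 0 → v j = 0) := by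
      by_cases hzp : ∃ i, 0 < z i
      · rcases hiii z hzorth hzp with ⟨lam, hlam, hπ⟩ | ⟨τ, hτmem, hτne, hτz⟩
        · exfalso
          apply hπ
          refine ⟨⟨fun j => if z j = lam then c j else 0, ?_, ?_⟩, ?_⟩
          · show W.mulVec _ = 0
            funext i
            have hli := hlev lam hlam i
            have hcalc : ∑ j, W i j * (if z j = lam then c j else 0)
                = ∑ j ∈ Finset.univ.filter (fun j => z j = lam), c j * W i j := by
              rw [Finset.sum_filter]
              apply Finset.sum_congr rfl
              intro j _
              by_cases hj : z j = lam
              · rw [if_pos hj, if_pos hj]; ring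
              · rw [if_neg hj, if_neg hj, mul_zero]
            show ∑ j, W i j * (if z j = lam then c j else 0) = 0
            rw [hcalc, hli]
          · funext i
            show SignType.sign (if z i = lam then c i else 0)
                = if z i = lam then SignType.pos else 0
            by_cases hj : z i = lam
            · rw [if_pos hj, if_pos hj, sign_pos (hc i)]
              rfl
            · rw [if_neg hj, if_neg hj]
              exact sign_zero
          · intro i
            show (0 : SignType) ≤ if z i = lam then SignType.pos else 0
            by_cases hj : z i = lam
            · rw [if_pos hj]; decide
            · rw [if_neg hj]
        · obtain ⟨⟨v, hvorth, hveq⟩, hτnn⟩ := hτmem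
          refine ⟨v, hvorth, ?_, ?_, ?_⟩
          · intro j
            apply sign_nonneg_iff.mp
            rw [show SignType.sign (v j) = τ j from congrFun hveq j]
            exact hτnn j
          · intro h0
            apply hτne
            rw [← hveq, h0]
            funext i
            simp [signVec]
          · intro j hzj
            have hτ0 := hτz j hzj
            rw [← hveq] at hτ0
            simpa [signVec, sign_eq_zero_iff] using hτ0
      · push_neg at hzp
        have hnegorth : (fun j => -(z j)) ∈ orthSet (kerSet Wt) := by
          intro u hu
          have h0 := hzorth u hu
          have hcalc : ∑ i, u i * (fun j => -(z j)) i = -∑ i, u i * z i := by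
            rw [← Finset.sum_neg_distrib]
            apply Finset.sum_congr rfl
            intro i _
            show u i * -(z i) = -(u i * z i)
            ring
          rw [hcalc, h0, neg_zero]
        have hτtmem : signVec (fun j => -(z j)) ∈ plusPart (signSet (orthSet (kerSet Wt))) :=
          ⟨⟨fun j => -(z j), hnegorth, rfl⟩,
            fun i => sign_nonneg_iff.mpr (by simpa using hzp i)⟩
        have hτtne : signVec (fun j => -(z j)) ≠ 0 := by
          obtain ⟨i, hi⟩ : ∃ i, z i < 0 := by
            by_contra hno
            push_neg at hno
            apply hzne
            funext i
            exact le_antisymm (hzp i) (hno i)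
          intro h0
          have := congrFun h0 i
          simp only [signVec, Pi.zero_apply] at this
          rw [sign_pos (by linarith : (0:ℝ) < -(z i))] at this
          exact one_ne_zero this
        obtain ⟨τ, hτmem, hτne, hsleq⟩ := hii _ hτtmem hτtne
        obtain ⟨⟨v, hvorth, hveq⟩, hτnn⟩ := hτmem
        refine ⟨v, hvorth, ?_, ?_, ?_⟩
        · intro j
          apply sign_nonneg_iff.mp
          rw [show SignType.sign (v j) = τ j from congrFun hveq j]
          exact hτnn j
        · intro h0
          apply hτne
          rw [← hveq, h0]
          funext i
          simp [signVec]
        · intro j hzj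
          have hτt0 : signVec (fun j' => -(z j')) j = 0 := by
            simp [signVec, hzj]
          have hτ0 : τ j = 0 := by
            rcases hsleq j with h | h
            · exact h
            · rw [h, hτt0]
          rw [← hveq] at hτ0
          simpa [signVec, sign_eq_zero_iff] using hτ0
    obtain ⟨v, hvorth, hvnn, hvne, hvz⟩ := hv
    rw [hyeq]
    exact v_to_frontier W z hc hvorth hvnn hvne hvz
end
end

section
/- Let S, S̃ be subspaces of ℝ^n of equal dimension. Then sign(S) ⊆ cl(sign(S̃)) if and only if sign(S⊥) ⊆ cl(sign(S̃⊥)). -/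
open scoped BigOperators

noncomputable section

/-- The (lower) closure of a set of sign vectors. -/
def clSV {n : ℕ} (T : Set (Fin n → SignType)) : Set (Fin n → SignType) :=
  {τ | ∃ ρ ∈ T, sleq τ ρ}

/-!
By Gordan's alternative, if no vector of `S̃⊥` sign-dominates `x ∈ S⊥`, then some nonzero `y ∈ S̃`
has `sign y ≤ sign x`. Positive diagonal rescalings `D_t` with `D_t x → y` carry `S` to subspaces
`D_t⁻¹ S ⊥ D_t x` with the same sign vectors as `S`. Their limit `W` has dimension `dim S`, is
orthogonal to `y`, and each of its vectors is sign-dominated by one of `S`, hence by one of `S̃`.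
A vector of `S̃⊥` dominated by a vector of `S̃` vanishes, so `W ∩ S̃⊥ = 0`; counting dimensions,
`W + S̃⊥` is the whole space, and `y ∈ (W + S̃⊥)⊥` is `0`. The converse is the same argument
for `S⊥` and `S̃⊥`.
-/

open Filter Topology
open scoped RealInnerProductSpace

/-- `sign x ≤ sign y` in the order of sign vectors used by `sleq`. -/
def SignLE {ι : Type*} (x y : ι → ℝ) : Prop := ∀ i, x i = 0 ∨ 0 < x i * y i

theorem SignLE.trans {ι : Type*} {x y z : ι → ℝ} (hxy : SignLE x y) (hyz : SignLE y z) :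
    SignLE x z := by
  intro i
  refine (hxy i).imp_right fun hxy' => ?_
  rcases hyz i with hy | hyz'
  · simp [hy] at hxy'
  · have := mul_pos hxy' hyz'
    nlinarith [sq_nonneg (y i)]

theorem exists_pos_signLE_add_smul {ι : Type*} [Finite ι] (u v : ι → ℝ) :
    ∃ ε > (0 : ℝ), SignLE u (u + ε • v) := by
  have hnhds : ∀ᶠ ε in 𝓝 (0 : ℝ), SignLE u (u + ε • v) := by
    refine Filter.eventually_all.2 fun i => ?_
    rcases eq_or_ne (u i) 0 with hi | hi
    · exact .of_forall fun _ => Or.inl hi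
    · have hcont : Continuous fun ε : ℝ => u i * (u i + ε * v i) := by fun_prop
      have hpos : 0 < u i * (u i + 0 * v i) := by simpa using mul_self_pos.2 hi
      filter_upwards [hcont.continuousAt.eventually (lt_mem_nhds hpos)] with ε hε
      exact Or.inr (by simpa using hε)
  obtain ⟨ε, hε, h⟩ :=
    ((eventually_mem_nhdsWithin (a := 0) (s := Set.Ioi 0)).and (nhdsWithin_le_nhds hnhds)).exists
  exact ⟨ε, hε, h⟩

theorem exists_mem_forall_inner_pos {V : Type*} [NormedAddCommGroup V] [InnerProductSpace ℝ V]
    {A : Set V} (hne : A.Nonempty) (hcomplete : IsComplete A) (hconv : Convex ℝ A)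
    (h0 : (0 : V) ∉ A) : ∃ c ∈ A, ∀ a ∈ A, 0 < ⟪c, a⟫ := by
  obtain ⟨c, hc, hmin⟩ := exists_norm_eq_iInf_of_complete_convex hne hcomplete hconv 0
  have hobtuse := (norm_eq_iInf_iff_real_inner_le_zero hconv hc).1 hmin
  have hc0 : 0 < ⟪c, c⟫ := real_inner_self_pos.2 fun h => h0 (h ▸ hc)
  refine ⟨c, hc, fun a ha => ?_⟩
  have := hobtuse a ha
  rw [zero_sub, inner_neg_left, inner_sub_right] at this
  linarith

/-- Gordan's alternative. -/
theorem exists_forall_inner_pos_or_exists_stdSimplex_sum_eq_zero {V : Type*}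
    [NormedAddCommGroup V] [InnerProductSpace ℝ V] {κ : Type*} [Fintype κ] (v : κ → V) :
    (∃ c, ∀ k, 0 < ⟪c, v k⟫) ∨ ∃ μ ∈ stdSimplex ℝ κ, ∑ k, μ k • v k = 0 := by
  classical
  rcases isEmpty_or_nonempty κ with hκ | ⟨⟨k₀⟩⟩
  · exact .inl ⟨0, isEmptyElim⟩
  set A := Fintype.linearCombination ℝ v '' stdSimplex ℝ κ
  by_cases h0 : (0 : V) ∈ A
  · obtain ⟨μ, hμ, hμ0⟩ := h0
    exact .inr ⟨μ, hμ, by rwa [Fintype.linearCombination_apply] at hμ0⟩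
  have hvA : ∀ k, v k ∈ A := fun k => ⟨Pi.single k 1, single_mem_stdSimplex ℝ k, by simp⟩
  have hcompact : IsCompact A :=
    (isCompact_stdSimplex ℝ κ).image (LinearMap.continuous_of_finiteDimensional _)
  obtain ⟨c, -, hc⟩ := exists_mem_forall_inner_pos ⟨_, hvA k₀⟩ hcompact.isComplete
    ((convex_stdSimplex ℝ κ).linear_image _) h0
  exact .inl ⟨c, fun k => hc _ (hvA k)⟩

theorem Submodule.finrank_inf_ker_add_finrank_map {K V V' : Type*} [DivisionRing K]
    [AddCommGroup V] [Module K V] [AddCommGroup V'] [Module K V'] [FiniteDimensional K V]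
    (S : Submodule K V) (f : V →ₗ[K] V') :
    Module.finrank K ↥(S ⊓ LinearMap.ker f) + Module.finrank K ↥(S.map f) =
      Module.finrank K S := by
  have := (f.domRestrict S).finrank_range_add_finrank_ker
  rw [LinearMap.range_domRestrict, LinearMap.ker_domRestrict, ← finrank_map_subtype_eq,
    map_comap_subtype] at this
  omega

theorem Submodule.disjoint_orthogonal_of_finrank_eq {𝕜 E : Type*} [RCLike 𝕜]
    [NormedAddCommGroup E] [InnerProductSpace 𝕜 E] [FiniteDimensional 𝕜 E]
    {W T : Submodule 𝕜 E} (hrank : Module.finrank 𝕜 W = Module.finrank 𝕜 T)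
    (hdisj : Disjoint W Tᗮ) : Disjoint Wᗮ T := by
  have hsup : W ⊔ Tᗮ = ⊤ :=
    eq_top_of_disjoint W Tᗮ (by rw [hrank, T.finrank_add_finrank_orthogonal]) hdisj
  rw [disjoint_iff]
  calc Wᗮ ⊓ T = Wᗮ ⊓ Tᗮᗮ := by rw [T.orthogonal_orthogonal]
    _ = ⊥ := by rw [inf_orthogonal, hsup, top_orthogonal_eq_bot]

section Euclidean

variable {ι : Type*} [Fintype ι]

theorem EuclideanSpace.real_inner_eq_sum (x y : EuclideanSpace ℝ ι) :
    ⟪x, y⟫ = ∑ i, x i * y i := by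
  simp [PiLp.inner_apply, mul_comm]

theorem SignLE.eq_zero_of_inner_eq_zero {w v : EuclideanSpace ℝ ι} (h : SignLE w v)
    (hwv : ⟪w, v⟫ = 0) : w = 0 := by
  rw [EuclideanSpace.real_inner_eq_sum] at hwv
  have hterms := (Finset.sum_eq_zero_iff_of_nonneg fun i _ => ?_).1 hwv
  · ext i
    exact (h i).resolve_right fun hpos => hpos.ne' (hterms i (Finset.mem_univ i))
  · rcases h i with hi | hi
    · simp [hi]
    · exact hi.le

theorem exists_mem_signLE_or_exists_mem_orthogonal_signLE
    (T : Submodule ℝ (EuclideanSpace ℝ ι)) (x : EuclideanSpace ℝ ι) :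
    (∃ y ∈ T, SignLE x y) ∨ ∃ w ∈ Tᗮ, w ≠ 0 ∧ SignLE w x := by
  classical
  -- `v k ∈ T` represents the functional `t ↦ x k * t k` on `T`
  let v : {i // x i ≠ 0} → T := fun k =>
    T.orthogonalProjectionOnto (EuclideanSpace.single k (x k))
  have hv : ∀ (c : T) k, ⟪c, v k⟫ = x k * (c : EuclideanSpace ℝ ι) k := by
    intro c k
    simp [v, EuclideanSpace.inner_single_right]
  rcases exists_forall_inner_pos_or_exists_stdSimplex_sum_eq_zero v with ⟨c, hc⟩ | ⟨μ, hμ, hμ0⟩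
  · refine .inl ⟨c, c.2, fun i => or_iff_not_imp_left.2 fun hi => ?_⟩
    simpa [hv] using hc ⟨i, hi⟩
  let w : EuclideanSpace ℝ ι := ∑ k, μ k • EuclideanSpace.single (k : ι) (x k)
  have hw : ∀ i, w i = if h : x i = 0 then 0 else μ ⟨i, h⟩ * x i := by
    intro i
    simp only [w, WithLp.ofLp_sum, WithLp.ofLp_smul, Finset.sum_apply, Pi.smul_apply,
      PiLp.single_apply]
    split_ifs with hi
    · refine Finset.sum_eq_zero fun k _ => ?_
      have hik : i ≠ k := fun h => k.2 (h ▸ hi)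
      simp [hik]
    · rw [Fintype.sum_eq_single (⟨i, hi⟩ : {i // x i ≠ 0})]
      · simp
      · intro k hk
        have hik : i ≠ k := fun h => hk (Subtype.ext h.symm)
        simp [hik]
  refine .inr ⟨w, ?_, ?_, fun i => ?_⟩
  · rw [← Submodule.orthogonalProjectionOnto_eq_zero_iff]
    simp only [w, map_sum, map_smul]
    exact hμ0
  · obtain ⟨k, -, hk⟩ := Finset.exists_lt_of_sum_lt (f := fun _ => (0 : ℝ)) (g := μ)
      (s := Finset.univ) (by simp [hμ.2])
    intro hw0
    have := hw k
    simp [hw0, k.2, hk.ne'] at this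
  · rw [hw]
    split_ifs with hi
    · exact .inl rfl
    · rcases (hμ.1 ⟨i, hi⟩).eq_or_lt with hμi | hμi
      · simp [← hμi]
      · exact .inr (by nlinarith [mul_self_pos.2 hi])

section Diagonal

variable [DecidableEq ι]

@[simp] theorem Matrix.toEuclideanLin_diagonal_apply (c : ι → ℝ) (u : EuclideanSpace ℝ ι)
    (i : ι) :
    Matrix.toEuclideanLin (Matrix.diagonal c) u i = c i * u i := by
  simp [Matrix.mulVec_diagonal]

theorem mem_ker_toEuclideanLin_diagonal_indicator {K : Set ι} {u : EuclideanSpace ℝ ι} :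
    u ∈ LinearMap.ker (Matrix.toEuclideanLin (Matrix.diagonal (K.indicator 1))) ↔
      ∀ i ∈ K, u i = 0 := by
  classical
  simp only [LinearMap.mem_ker, PiLp.ext_iff, Matrix.toEuclideanLin_diagonal_apply,
    Set.indicator_apply, PiLp.zero_apply]
  refine forall_congr' fun i => ?_
  split_ifs with hi <;> simp [hi]

/-- The limit, as `t → 0⁺`, of the images of `S` under the diagonal maps multiplying the
coordinates in `K` by `1 / t` and every other coordinate `i` by `c i`. -/
def scaledLimit (S : Submodule ℝ (EuclideanSpace ℝ ι)) (K : Set ι) (c : ι → ℝ) :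
    Submodule ℝ (EuclideanSpace ℝ ι) :=
  (S ⊓ LinearMap.ker (Matrix.toEuclideanLin (Matrix.diagonal (K.indicator 1)))).map
      (Matrix.toEuclideanLin (Matrix.diagonal c)) ⊔
    S.map (Matrix.toEuclideanLin (Matrix.diagonal (K.indicator 1)))

variable {S : Submodule ℝ (EuclideanSpace ℝ ι)} {K : Set ι} {c : ι → ℝ}

theorem finrank_scaledLimit (hc : ∀ i, c i ≠ 0) :
    Module.finrank ℝ (scaledLimit S K c) = Module.finrank ℝ S := by
  set π := Matrix.toEuclideanLin (Matrix.diagonal (K.indicator (1 : ι → ℝ)))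
  set D := Matrix.toEuclideanLin (Matrix.diagonal c)
  have hD : Function.Injective D := fun u v huv => by
    ext i
    simpa [D, hc i] using congrArg (· i) huv
  have hdisj : (S ⊓ LinearMap.ker π).map D ⊓ S.map π = ⊥ := by
    rw [eq_bot_iff]
    rintro w ⟨⟨u, ⟨-, hu⟩, rfl⟩, ⟨v, -, hv⟩⟩
    rw [SetLike.mem_coe, mem_ker_toEuclideanLin_diagonal_indicator] at hu
    ext i
    by_cases hi : i ∈ K
    · simp [D, hu i hi]
    · rw [← hv]
      simp [π, hi]
  have h := Submodule.finrank_sup_add_finrank_inf_eq ((S ⊓ LinearMap.ker π).map D) (S.map π)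
  rw [hdisj, finrank_bot, add_zero, ← (Submodule.equivMapOfInjective D hD _).finrank_eq] at h
  rw [scaledLimit, h, S.finrank_inf_ker_add_finrank_map π]

theorem exists_signLE_of_mem_scaledLimit (hc : ∀ i, 0 < c i) {w : EuclideanSpace ℝ ι}
    (hw : w ∈ scaledLimit S K c) : ∃ s ∈ S, SignLE w s := by
  obtain ⟨-, ⟨u, ⟨huS, huK⟩, rfl⟩, -, ⟨v, hvS, rfl⟩, rfl⟩ := Submodule.mem_sup.1 hw
  rw [SetLike.mem_coe, mem_ker_toEuclideanLin_diagonal_indicator] at huK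
  obtain ⟨ε, hε, huv⟩ := exists_pos_signLE_add_smul (u : ι → ℝ) v
  refine ⟨u + ε • v, S.add_mem huS (S.smul_mem ε hvS), fun i => ?_⟩
  by_cases hi : i ∈ K
  · rcases eq_or_ne (v i) 0 with hvi | hvi
    · simp [hi, huK i hi, hvi]
    · right
      simp only [PiLp.add_apply, Matrix.toEuclideanLin_diagonal_apply, huK i hi, mul_zero, hi,
        Set.indicator_of_mem, Pi.one_apply, one_mul, zero_add, PiLp.smul_apply, smul_eq_mul]
      nlinarith [mul_pos hε (mul_self_pos.2 hvi)]
  · simp only [hi, not_false_eq_true, PiLp.add_apply, PiLp.smul_apply, smul_eq_mul,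
      Matrix.toEuclideanLin_diagonal_apply, Set.indicator_of_notMem, zero_mul, add_zero]
    rcases huv i with hui | hui
    · simp [hui]
    · right
      rw [mul_assoc]
      exact mul_pos (hc i) (by simpa using hui)

theorem mem_orthogonal_scaledLimit {x y : EuclideanSpace ℝ ι} (hx : x ∈ Sᗮ)
    (hyK : ∀ i ∈ K, y i = 0) (hcy : ∀ i ∉ K, c i * y i = x i) : y ∈ (scaledLimit S K c)ᗮ := by
  rw [scaledLimit, ← Submodule.inf_orthogonal]
  refine ⟨(Submodule.mem_orthogonal _ y).2 ?_, (Submodule.mem_orthogonal _ y).2 ?_⟩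
  · rintro - ⟨u, ⟨huS, huK⟩, rfl⟩
    rw [SetLike.mem_coe, mem_ker_toEuclideanLin_diagonal_indicator] at huK
    rw [← (S.mem_orthogonal x).1 hx u huS, EuclideanSpace.real_inner_eq_sum,
      EuclideanSpace.real_inner_eq_sum]
    refine Finset.sum_congr rfl fun i _ => ?_
    by_cases hi : i ∈ K
    · simp [huK i hi]
    · rw [Matrix.toEuclideanLin_diagonal_apply, mul_right_comm, hcy i hi, mul_comm]
  · rintro - ⟨v, -, rfl⟩
    rw [EuclideanSpace.real_inner_eq_sum]
    refine Finset.sum_eq_zero fun i _ => ?_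
    by_cases hi : i ∈ K <;> simp [hi, hyK]

end Diagonal

variable {S T : Submodule ℝ (EuclideanSpace ℝ ι)}

theorem eq_zero_of_signLE_of_mem_orthogonal
    (hrank : Module.finrank ℝ S = Module.finrank ℝ T) (hST : ∀ u ∈ S, ∃ v ∈ T, SignLE u v)
    {x y : EuclideanSpace ℝ ι} (hx : x ∈ Sᗮ) (hy : y ∈ T) (hyx : SignLE y x) : y = 0 := by
  classical
  set K := {i | y i = 0}
  set c : ι → ℝ := fun i => if y i = 0 then 1 else x i / y i
  have hc : ∀ i, 0 < c i := by
    intro i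
    by_cases hi : y i = 0
    · simp [c, hi]
    · simpa [c, hi, div_pos_iff, mul_pos_iff, and_comm] using (hyx i).resolve_left hi
  have hWT : Disjoint (scaledLimit S K c) Tᗮ := by
    refine Submodule.disjoint_def.2 fun w hw hwT => ?_
    obtain ⟨s, hs, hws⟩ := exists_signLE_of_mem_scaledLimit hc hw
    obtain ⟨v, hv, hsv⟩ := hST s hs
    exact (hws.trans hsv).eq_zero_of_inner_eq_zero ((T.mem_orthogonal' w).1 hwT v hv)
  have hyW : y ∈ (scaledLimit S K c)ᗮ :=
    mem_orthogonal_scaledLimit hx (fun i hi => hi) fun i (hi : y i ≠ 0) => by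
      simp only [c, if_neg hi]
      exact div_mul_cancel₀ _ hi
  have hrankW := (finrank_scaledLimit (S := S) (K := K) fun i => (hc i).ne').trans hrank
  exact Submodule.disjoint_def.1 (Submodule.disjoint_orthogonal_of_finrank_eq hrankW hWT) y hyW hy

theorem forall_orthogonal_exists_signLE (hrank : Module.finrank ℝ S = Module.finrank ℝ T)
    (hST : ∀ u ∈ S, ∃ v ∈ T, SignLE u v) : ∀ x ∈ Sᗮ, ∃ y ∈ Tᗮ, SignLE x y := by
  intro x hx
  refine (exists_mem_signLE_or_exists_mem_orthogonal_signLE Tᗮ x).resolve_right ?_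
  rintro ⟨w, hw, hw0, hwx⟩
  rw [Submodule.orthogonal_orthogonal] at hw
  exact hw0 (eq_zero_of_signLE_of_mem_orthogonal hrank hST hx hw hwx)

theorem forall_exists_signLE_iff_orthogonal (hrank : Module.finrank ℝ S = Module.finrank ℝ T) :
    (∀ u ∈ S, ∃ v ∈ T, SignLE u v) ↔ ∀ x ∈ Sᗮ, ∃ y ∈ Tᗮ, SignLE x y := by
  refine ⟨forall_orthogonal_exists_signLE hrank, fun h => ?_⟩
  have hrank' : Module.finrank ℝ Sᗮ = Module.finrank ℝ Tᗮ := by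
    have hS := S.finrank_add_finrank_orthogonal
    have hT := T.finrank_add_finrank_orthogonal
    omega
  simpa only [Submodule.orthogonal_orthogonal] using forall_orthogonal_exists_signLE hrank' h

end Euclidean

theorem sign_eq_zero_or_sign_eq_sign_iff {a b : ℝ} :
    SignType.sign a = 0 ∨ SignType.sign a = SignType.sign b ↔ a = 0 ∨ 0 < a * b := by
  rw [sign_eq_zero_iff, ← sign_eq_one_iff, sign_mul]
  rcases eq_or_ne a 0 with ha | ha
  · simp [ha]
  · simp only [ha, false_or]
    have hs : SignType.sign a ≠ 0 := sign_ne_zero.2 ha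
    generalize SignType.sign a = s at hs ⊢
    generalize SignType.sign b = t
    revert s t
    decide

theorem sleq_signVec_iff {n : ℕ} {u v : Fin n → ℝ} : sleq (signVec u) (signVec v) ↔ SignLE u v :=
  forall_congr' fun _ => sign_eq_zero_or_sign_eq_sign_iff

theorem signSet_subset_clSV_signSet_iff {n : ℕ} (A B : Set (Fin n → ℝ)) :
    signSet A ⊆ clSV (signSet B) ↔ ∀ u ∈ A, ∃ v ∈ B, SignLE u v := by
  simp only [signSet, clSV, Set.subset_def, Set.forall_mem_image, Set.mem_ofPred_eq,
    Set.exists_mem_image, sleq_signVec_iff]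

theorem ofLp_mem_orthSet_iff {n : ℕ} (S : Submodule ℝ (Fin n → ℝ))
    (x : EuclideanSpace ℝ (Fin n)) :
    x.ofLp ∈ orthSet (S : Set (Fin n → ℝ)) ↔
      x ∈ (S.comap (WithLp.linearEquiv 2 ℝ (Fin n → ℝ)).toLinearMap)ᗮ := by
  simp only [orthSet, Set.mem_ofPred_eq, Submodule.mem_orthogonal, Submodule.mem_comap,
    EuclideanSpace.real_inner_eq_sum, SetLike.mem_coe]
  exact ⟨fun h u hu => h _ hu, fun h u hu => h (WithLp.toLp 2 u) hu⟩

theorem orthSet_eq_image_ofLp {n : ℕ} (S : Submodule ℝ (Fin n → ℝ)) :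
    orthSet (S : Set (Fin n → ℝ)) =
      WithLp.ofLp '' ((S.comap (WithLp.linearEquiv 2 ℝ (Fin n → ℝ)).toLinearMap)ᗮ :
        Set (EuclideanSpace ℝ (Fin n))) := by
  ext v
  refine ⟨fun hv => ⟨WithLp.toLp 2 v, (ofLp_mem_orthSet_iff S _).1 hv, rfl⟩, ?_⟩
  rintro ⟨x, hx, rfl⟩
  exact (ofLp_mem_orthSet_iff S x).2 hx

theorem coe_submodule_eq_image_ofLp {ι : Type*} (S : Submodule ℝ (ι → ℝ)) :
    (S : Set (ι → ℝ)) =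
      WithLp.ofLp '' (S.comap (WithLp.linearEquiv 2 ℝ (ι → ℝ)).toLinearMap :
        Set (EuclideanSpace ℝ ι)) := by
  ext v
  exact ⟨fun hv => ⟨WithLp.toLp 2 v, hv, rfl⟩, by rintro ⟨x, hx, rfl⟩; exact hx⟩

/-- for subspaces `S, S̃` of equal dimension,
`sign(S) ⊆ cl(sign(S̃))` iff `sign(S⊥) ⊆ cl(sign(S̃⊥))`. -/
theorem stmt15 {n : ℕ} (S St : Submodule ℝ (Fin n → ℝ))
    (hdim : Module.finrank ℝ S = Module.finrank ℝ St) :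
    signSet (S : Set (Fin n → ℝ)) ⊆ clSV (signSet (St : Set (Fin n → ℝ))) ↔
    signSet (orthSet (S : Set (Fin n → ℝ))) ⊆
      clSV (signSet (orthSet (St : Set (Fin n → ℝ)))) := by
  let e := WithLp.linearEquiv 2 ℝ (Fin n → ℝ)
  have hrank : Module.finrank ℝ (S.comap e.toLinearMap) =
      Module.finrank ℝ (St.comap e.toLinearMap) := by
    rwa [Submodule.comap_equiv_eq_map_symm, Submodule.comap_equiv_eq_map_symm,
      LinearEquiv.finrank_map_eq, LinearEquiv.finrank_map_eq]
  rw [signSet_subset_clSV_signSet_iff, signSet_subset_clSV_signSet_iff, orthSet_eq_image_ofLp,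
    orthSet_eq_image_ofLp, coe_submodule_eq_image_ofLp S, coe_submodule_eq_image_ofLp St]
  simp only [Set.forall_mem_image, Set.exists_mem_image]
  exact forall_exists_signLE_iff_orthogonal hrank
end
end
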